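/- arXiv:2002.01347 — 8 statements merged into one kernel-verified Lean document; each statement's English description precedes it below -/
import Mathlib

section
/- For a graph G with no isolated vertices, 2γ(G) ≤ γ_tR(G) ≤ 3γ(G), where γ is the domination number and γ_tR is the total Roman domination number. -/
open SimpleGraph Finset

variable {V : Type*}

/-- `S` is a dominating set of `G`. -/
def Dominating (G : SimpleGraph V) (S : Finset V) : Prop :=
  ∀ v, v ∉ S → ∃ u ∈ S, G.Adj u v

/-- `S` is a total dominating set of `G`. -/
def TotalDominating (G : SimpleGraph V) (S : Finset V) : Prop :=
  ∀ v : V, ∃ u ∈ S, G.Adj u v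

/-- The domination number γ(G). -/
noncomputable def gamma (G : SimpleGraph V) [Fintype V] : ℕ :=
  sInf {n | ∃ S : Finset V, Dominating G S ∧ S.card = n}

/-- The total domination number γ_t(G). -/
noncomputable def gammaT (G : SimpleGraph V) [Fintype V] : ℕ :=
  sInf {n | ∃ S : Finset V, TotalDominating G S ∧ S.card = n}

/-- `f` is a total Roman dominating function on `G`. -/
def IsTRDF (G : SimpleGraph V) (f : V → ℕ) : Prop :=
  (∀ v, f v ≤ 2) ∧ (∀ v, f v = 0 → ∃ u, G.Adj u v ∧ f u = 2) ∧
    (∀ v, 0 < f v → ∃ u, G.Adj u v ∧ 0 < f u)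

/-- The total Roman domination number γ_tR(G). -/
noncomputable def gammaTR (G : SimpleGraph V) [Fintype V] : ℕ :=
  sInf {n | ∃ f : V → ℕ, IsTRDF G f ∧ ∑ v, f v = n}

/-- The graph `G + uv`. -/
def addEdge (G : SimpleGraph V) (u v : V) : SimpleGraph V :=
  G ⊔ SimpleGraph.fromEdgeSet {s(u, v)}

/-- The graph `G - uv`. -/
def deleteEdge (G : SimpleGraph V) (u v : V) : SimpleGraph V :=
  G.deleteEdges {s(u, v)}

/-- `G` has no isolated vertices. -/
def NoIsolated (G : SimpleGraph V) : Prop := ∀ v : V, ∃ u, G.Adj u v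

/-- The degree of `v` in `G`. -/
noncomputable def degreeN (G : SimpleGraph V) (v : V) : ℕ :=
  {u | G.Adj v u}.ncard

lemma ore_rel (G : SimpleGraph V) (W : Finset V)
    (hW : ∀ v ∈ W, ∃ u ∈ W, G.Adj u v) :
    ∃ D : Finset V, D ⊆ W ∧ (∀ v ∈ W, v ∉ D → ∃ u ∈ D, G.Adj u v) ∧
      2 * D.card ≤ W.card := by
  classical
  set S : Set ℕ := {n | ∃ D : Finset V, (D ⊆ W ∧ ∀ v ∈ W, v ∉ D → ∃ u ∈ D, G.Adj u v)
      ∧ D.card = n} with hS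
  have hne : S.Nonempty := ⟨W.card, W, ⟨Finset.Subset.refl W, fun v hv hv' => absurd hv hv'⟩, rfl⟩
  obtain ⟨D, ⟨hDsub, hDdom⟩, hDcard⟩ := Nat.sInf_mem hne
  refine ⟨D, hDsub, hDdom, ?_⟩
  -- W \ D is also a relative dominating set
  have hcomp : ∀ v ∈ W, v ∉ (W \ D) → ∃ u ∈ W \ D, G.Adj u v := by
    intro v hvW hv
    have hvD : v ∈ D := by
      by_contra hvD
      exact hv (Finset.mem_sdiff.mpr ⟨hvW, hvD⟩)
    by_contra hno
    push_neg at hno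
    -- all W-neighbors of v are in D
    have hnb : ∀ u ∈ W, G.Adj u v → u ∈ D := by
      intro u huW hadj
      by_contra huD
      exact absurd hadj (hno u (Finset.mem_sdiff.mpr ⟨huW, huD⟩))
    -- D.erase v is a smaller relative dominating set
    have herase : (D.erase v) ⊆ W ∧ ∀ w ∈ W, w ∉ D.erase v → ∃ u ∈ D.erase v, G.Adj u w := by
      refine ⟨(Finset.erase_subset v D).trans hDsub, ?_⟩
      intro w hwW hw
      by_cases hwv : w = v
      · subst hwv
        obtain ⟨u, huW, hadj⟩ := hW w hwW
        have huD : u ∈ D := hnb u huW hadj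
        have hune : u ≠ w := G.ne_of_adj hadj
        exact ⟨u, Finset.mem_erase.mpr ⟨hune, huD⟩, hadj⟩
      · have hwD : w ∉ D := by
          intro hwD
          exact hw (Finset.mem_erase.mpr ⟨hwv, hwD⟩)
        obtain ⟨u, huD, hadj⟩ := hDdom w hwW hwD
        have hune : u ≠ v := by
          intro huv
          subst huv
          exact hwD (hnb w hwW hadj.symm)
        exact ⟨u, Finset.mem_erase.mpr ⟨hune, huD⟩, hadj⟩
    have hmem : (D.erase v).card ∈ S := ⟨D.erase v, herase, rfl⟩
    have hlt : (D.erase v).card < D.card := Finset.card_erase_lt_of_mem hvD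
    have := Nat.sInf_le hmem
    omega
  have hle : D.card ≤ (W \ D).card := by
    rw [hDcard]
    exact Nat.sInf_le ⟨W \ D, ⟨Finset.sdiff_subset, hcomp⟩, rfl⟩
  have hcard : (W \ D).card = W.card - D.card := Finset.card_sdiff_of_subset hDsub
  have hDleW : D.card ≤ W.card := Finset.card_le_card hDsub
  omega

theorem stmt1 (G : SimpleGraph V) [Fintype V] (h : NoIsolated G) :
    2 * gamma G ≤ gammaTR G ∧ gammaTR G ≤ 3 * gamma G := by
  classical
  constructor
  · -- lower bound
    have hne : {n | ∃ f : V → ℕ, IsTRDF G f ∧ ∑ v, f v = n}.Nonempty := by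
      refine ⟨∑ v : V, (1 : ℕ), fun _ => 1, ⟨fun v => one_le_two, fun v hv => absurd hv one_ne_zero,
        fun v _ => ?_⟩, rfl⟩
      obtain ⟨u, hu⟩ := h v
      exact ⟨u, hu, one_pos⟩
    apply le_csInf hne
    rintro n ⟨f, ⟨hf2, hf0, hftot⟩, rfl⟩
    set V2 : Finset V := Finset.univ.filter (fun v => f v = 2) with hV2
    set V1 : Finset V := Finset.univ.filter (fun v => f v = 1) with hV1
    have hsum : ∑ v, f v = 2 * V2.card + V1.card := by
      have : ∀ v : V, f v = 2 * (if f v = 2 then 1 else 0) + (if f v = 1 then 1 else 0) := by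
        intro v
        have := hf2 v
        interval_cases (f v) <;> simp
      rw [Finset.sum_congr rfl (fun v _ => this v)]
      rw [Finset.sum_add_distrib, ← Finset.mul_sum]
      congr 1
      · congr 1
        rw [hV2, Finset.card_filter]
      · rw [hV1, Finset.card_filter]
    set V1' : Finset V := V1.filter (fun v => ∀ u, G.Adj u v → f u ≠ 2) with hV1'
    set W : Finset V := V1.filter (fun v => v ∈ V1' ∨ ∃ x ∈ V1', G.Adj x v) with hWdef
    have hWiso : ∀ v ∈ W, ∃ u ∈ W, G.Adj u v := by
      intro v hv
      rw [hWdef, Finset.mem_filter] at hv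
      obtain ⟨hvV1, hcase⟩ := hv
      rcases hcase with hv1' | ⟨x, hx, hadj⟩
      · have hfv : 0 < f v := by
          have h1 := (Finset.mem_filter.mp hvV1).2; omega
        obtain ⟨u, hadj, hfu⟩ := hftot v hfv
        have hu2 : f u ≠ 2 := by
          rw [hV1', Finset.mem_filter] at hv1'
          exact hv1'.2 u hadj
        have hu1 : f u = 1 := by have := hf2 u; omega
        refine ⟨u, ?_, hadj⟩
        rw [hWdef, Finset.mem_filter]
        refine ⟨by rw [hV1, Finset.mem_filter]; exact ⟨Finset.mem_univ u, hu1⟩, ?_⟩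
        exact Or.inr ⟨v, hv1', hadj.symm⟩
      · refine ⟨x, ?_, hadj⟩
        rw [hWdef, Finset.mem_filter]
        have hxV1 : x ∈ V1 := by
          rw [hV1'] at hx; exact Finset.mem_of_mem_filter x hx
        exact ⟨hxV1, Or.inl hx⟩
    obtain ⟨M, hMsub, hMdom, hMcard⟩ := ore_rel G W hWiso
    set D : Finset V := V2 ∪ M with hD
    have hDdom : Dominating G D := by
      intro v hvD
      have hv2 : f v ≠ 2 := by
        intro hfv
        exact hvD (Finset.mem_union_left M (by rw [hV2, Finset.mem_filter]; exact ⟨Finset.mem_univ v, hfv⟩))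
      by_cases hfv0 : f v = 0
      · obtain ⟨u, hadj, hfu⟩ := hf0 v hfv0
        exact ⟨u, Finset.mem_union_left M (by rw [hV2, Finset.mem_filter]; exact ⟨Finset.mem_univ u, hfu⟩), hadj⟩
      · have hfv1 : f v = 1 := by have := hf2 v; omega
        by_cases hnb : ∃ u, G.Adj u v ∧ f u = 2
        · obtain ⟨u, hadj, hfu⟩ := hnb
          exact ⟨u, Finset.mem_union_left M (by rw [hV2, Finset.mem_filter]; exact ⟨Finset.mem_univ u, hfu⟩), hadj⟩
        · push_neg at hnb
          have hvV1' : v ∈ V1' := by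
            rw [hV1', Finset.mem_filter]
            exact ⟨by rw [hV1, Finset.mem_filter]; exact ⟨Finset.mem_univ v, hfv1⟩, hnb⟩
          have hvW : v ∈ W := by
            rw [hWdef, Finset.mem_filter]
            exact ⟨Finset.mem_of_mem_filter v hvV1', Or.inl hvV1'⟩
          have hvM : v ∉ M := fun hvM => hvD (Finset.mem_union_right V2 hvM)
          obtain ⟨u, huM, hadj⟩ := hMdom v hvW hvM
          exact ⟨u, Finset.mem_union_right V2 huM, hadj⟩
    have hgamma : gamma G ≤ D.card := Nat.sInf_le ⟨D, hDdom, rfl⟩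
    have hDcard : D.card ≤ V2.card + M.card := Finset.card_union_le V2 M
    have hWV1 : W.card ≤ V1.card := Finset.card_le_card (Finset.filter_subset _ _)
    omega
  · -- upper bound
    have hγne : {n | ∃ S : Finset V, Dominating G S ∧ S.card = n}.Nonempty :=
      ⟨(Finset.univ : Finset V).card, Finset.univ, fun v hv => absurd (Finset.mem_univ v) hv, rfl⟩
    obtain ⟨S₀, hS₀dom, hS₀card⟩ := Nat.sInf_mem hγne
    have hgamma : gamma G = S₀.card := hS₀card.symm
    -- choose a neighbor for each vertex
    have hg : ∀ v : V, G.Adj (Classical.choose (h v)) v := fun v => Classical.choose_spec (h v)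
    set g : V → V := fun v => Classical.choose (h v) with hgdef
    set T : Finset V := S₀.image g with hT
    set f : V → ℕ := fun v => if v ∈ S₀ then 2 else if v ∈ T then 1 else 0 with hf
    have hfTRDF : IsTRDF G f := by
      refine ⟨fun v => ?_, fun v hv => ?_, fun v hv => ?_⟩
      · simp only [hf]; split <;> [skip; split] <;> omega
      · have hvS : v ∉ S₀ := by
          intro hvS
          simp only [hf] at hv; simp [hvS] at hv
        obtain ⟨u, huS, hadj⟩ := hS₀dom v hvS
        exact ⟨u, hadj, by simp only [hf]; simp [huS]⟩
      · by_cases hvS : v ∈ S₀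
        · refine ⟨g v, hg v, ?_⟩
          have hgvT : g v ∈ T := Finset.mem_image_of_mem g hvS
          simp only [hf]
          split <;> [omega; simp [hgvT]]
        · have hvT : v ∈ T := by
            by_contra hvT
            simp only [hf] at hv; simp [hvS, hvT] at hv
          rw [hT] at hvT
          obtain ⟨s, hsS, hgs⟩ := Finset.mem_image.mp hvT
          refine ⟨s, ?_, by simp only [hf]; simp [hsS]⟩
          have : G.Adj (g s) s := hg s
          rw [hgs] at this
          exact this.symm
    have hsum : ∑ v, f v ≤ 3 * S₀.card := by
      have hle : ∀ v : V, f v ≤ (if v ∈ S₀ then 2 else 0) + (if v ∈ T then 1 else 0) := by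
        intro v
        simp only [hf]
        split <;> split <;> omega
      calc ∑ v, f v ≤ ∑ v : V, ((if v ∈ S₀ then 2 else 0) + (if v ∈ T then 1 else 0)) :=
            Finset.sum_le_sum (fun v _ => hle v)
        _ = 2 * S₀.card + T.card := by
            rw [Finset.sum_add_distrib]
            congr 1
            · rw [Finset.sum_ite_mem, Finset.univ_inter, Finset.sum_const, smul_eq_mul, mul_comm]
            · rw [Finset.sum_ite_mem, Finset.univ_inter, Finset.sum_const, smul_eq_mul, mul_one]
        _ ≤ 2 * S₀.card + S₀.card := by
            have := Finset.card_image_le (s := S₀) (f := g)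
            rw [hT]; omega
        _ = 3 * S₀.card := by ring
    have : gammaTR G ≤ ∑ v, f v := Nat.sInf_le ⟨f, hfTRDF, rfl⟩
    rw [hgamma]
    omega
end

section
/- If G is a graph with no isolated vertices, then γ_t(G) ≤ γ_tR(G) ≤ 2γ_t(G); furthermore γ_tR(G) = γ_t(G) if and only if G is a disjoint union of copies of K_2. -/
open SimpleGraph Finset

variable {V : Type*}

open Classical

lemma td_univ (G : SimpleGraph V) [Fintype V] (h : NoIsolated G) :
    TotalDominating G Finset.univ := fun v => by
  obtain ⟨u, hu⟩ := h v; exact ⟨u, Finset.mem_univ u, hu⟩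

lemma gammaT_le (G : SimpleGraph V) [Fintype V] {S : Finset V}
    (hS : TotalDominating G S) : gammaT G ≤ S.card :=
  Nat.sInf_le ⟨S, hS, rfl⟩

lemma gammaTR_le (G : SimpleGraph V) [Fintype V] {f : V → ℕ}
    (hf : IsTRDF G f) : gammaTR G ≤ ∑ v, f v :=
  Nat.sInf_le ⟨f, hf, rfl⟩

lemma exists_trdf_min (G : SimpleGraph V) [Fintype V] (h : NoIsolated G) :
    ∃ f : V → ℕ, IsTRDF G f ∧ ∑ v, f v = gammaTR G := by
  have hf2 : IsTRDF G (fun _ => 2) := by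
    refine ⟨fun _ => le_refl 2, fun v h2 => by simp at h2, fun v _ => ?_⟩
    obtain ⟨u, hu⟩ := h v; exact ⟨u, hu, by norm_num⟩
  have hne : {n | ∃ f : V → ℕ, IsTRDF G f ∧ ∑ v, f v = n}.Nonempty :=
    ⟨∑ v : V, (2 : ℕ), fun _ => 2, hf2, rfl⟩
  exact Nat.sInf_mem hne

lemma exists_td_min (G : SimpleGraph V) [Fintype V] (h : NoIsolated G) :
    ∃ S : Finset V, TotalDominating G S ∧ S.card = gammaT G := by
  have hne : {n | ∃ S : Finset V, TotalDominating G S ∧ S.card = n}.Nonempty :=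
    ⟨Finset.univ.card, Finset.univ, td_univ G h, rfl⟩
  exact Nat.sInf_mem hne

lemma support_td (G : SimpleGraph V) [Fintype V] {f : V → ℕ} (hf : IsTRDF G f) :
    TotalDominating G (Finset.univ.filter (fun v => f v ≠ 0)) := by
  intro v
  by_cases h0 : f v = 0
  · obtain ⟨u, hadj, hu⟩ := hf.2.1 v h0
    exact ⟨u, by simp [hu], hadj⟩
  · obtain ⟨u, hadj, hu⟩ := hf.2.2 v (Nat.pos_of_ne_zero h0)
    exact ⟨u, by simp [hu.ne'], hadj⟩

lemma card_support_le [Fintype V] (f : V → ℕ) :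
    (Finset.univ.filter (fun v => f v ≠ 0)).card ≤ ∑ v, f v := by
  calc (Finset.univ.filter (fun v => f v ≠ 0)).card
      = ∑ v ∈ Finset.univ.filter (fun v => f v ≠ 0), 1 := by
        rw [Finset.card_eq_sum_ones]
    _ ≤ ∑ v ∈ Finset.univ.filter (fun v => f v ≠ 0), f v :=
        Finset.sum_le_sum (fun i hi => Nat.one_le_iff_ne_zero.mpr (Finset.mem_filter.mp hi).2)
    _ ≤ ∑ v, f v := Finset.sum_le_sum_of_subset (Finset.filter_subset _ _)

theorem stmt2 (G : SimpleGraph V) [Fintype V] (h : NoIsolated G) :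
    (gammaT G ≤ gammaTR G ∧ gammaTR G ≤ 2 * gammaT G) ∧
      (gammaTR G = gammaT G ↔ ∀ v : V, degreeN G v = 1) := by
  obtain ⟨f, hf, hfsum⟩ := exists_trdf_min G h
  obtain ⟨S0, hS0, hS0card⟩ := exists_td_min G h
  have h1 : gammaT G ≤ gammaTR G := by
    rw [← hfsum]
    exact le_trans (gammaT_le G (support_td G hf)) (card_support_le f)
  have h2 : gammaTR G ≤ 2 * gammaT G := by
    have htrdf : IsTRDF G (fun v => if v ∈ S0 then 2 else 0) := by
      refine ⟨fun v => by by_cases hv : v ∈ S0 <;> simp [hv], fun v h0 => ?_, fun v hpos => ?_⟩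
      · obtain ⟨u, huS, hadj⟩ := hS0 v
        exact ⟨u, hadj, if_pos huS⟩
      · obtain ⟨u, huS, hadj⟩ := hS0 v
        exact ⟨u, hadj, by simp [huS]⟩
    have hsum : ∑ v, (if v ∈ S0 then 2 else 0) = 2 * S0.card := by
      rw [Finset.sum_ite_mem, Finset.univ_inter, Finset.sum_const, smul_eq_mul, mul_comm]
    calc gammaTR G ≤ ∑ v, (if v ∈ S0 then 2 else 0) := gammaTR_le G htrdf
      _ = 2 * S0.card := hsum
      _ = 2 * gammaT G := by rw [hS0card]
  refine ⟨⟨h1, h2⟩, ?_, ?_⟩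
  · -- forward direction
    intro heq
    set S : Finset V := Finset.univ.filter (fun v => f v ≠ 0) with hSdef
    have hcardle : S.card ≤ ∑ v, f v := card_support_le f
    have hlecard : ∑ v, f v ≤ S.card := by
      rw [hfsum, heq]; exact gammaT_le G (support_td G hf)
    have hcard : S.card = ∑ v, f v := le_antisymm hcardle hlecard
    have hone : ∀ v ∈ S, f v = 1 := by
      by_contra hcon
      push_neg at hcon
      obtain ⟨v0, hv0S, hv0⟩ := hcon
      have hv0' : 1 < f v0 := by
        have := (Finset.mem_filter.mp hv0S).2
        omega
      have : ∑ v ∈ S, 1 < ∑ v ∈ S, f v :=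
        Finset.sum_lt_sum (fun i hi => Nat.one_le_iff_ne_zero.mpr (Finset.mem_filter.mp hi).2)
          ⟨v0, hv0S, hv0'⟩
      have h3 : ∑ v ∈ S, f v ≤ ∑ v, f v := Finset.sum_le_sum_of_subset (Finset.filter_subset _ _)
      rw [Finset.sum_const, smul_eq_mul, mul_one] at this
      omega
    have hallpos : ∀ v, f v ≠ 0 := by
      intro v h0
      obtain ⟨u, hadj, hu2⟩ := hf.2.1 v h0
      have : u ∈ S := Finset.mem_filter.mpr ⟨Finset.mem_univ u, by omega⟩
      have := hone u this
      omega
    have hSuniv : S = Finset.univ := by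
      apply Finset.eq_univ_iff_forall.mpr
      intro v; exact Finset.mem_filter.mpr ⟨Finset.mem_univ v, hallpos v⟩
    have hsumN : ∑ v, f v = Fintype.card V := by
      calc ∑ v, f v = ∑ v, 1 := Finset.sum_congr rfl (fun v _ => by
            rw [hone v (hSuniv ▸ Finset.mem_univ v)])
        _ = Fintype.card V := by rw [Finset.sum_const, smul_eq_mul, mul_one, Finset.card_univ]
    have hgt : gammaT G = Fintype.card V := by rw [← heq, ← hfsum, hsumN]
    -- now show all degrees are 1
    intro v
    have hfin : ({u | G.Adj v u} : Set V).Finite := Set.toFinite _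
    have hpos : 0 < degreeN G v := by
      obtain ⟨u, hu⟩ := h v
      exact (Set.ncard_pos hfin).mpr ⟨u, hu.symm⟩
    by_contra hne
    have h2lt : 1 < degreeN G v := by omega
    obtain ⟨a, b, ha, hb, hab⟩ := (Set.one_lt_ncard_iff hfin).mp h2lt
    have hva : G.Adj v a := ha
    have hvb : G.Adj v b := hb
    -- find x such that univ.erase x is total dominating
    have hx : ∃ x : V, TotalDominating G (Finset.univ.erase x) := by
      by_cases hA : ∀ z, ∃ u, G.Adj u z ∧ u ≠ a
      · refine ⟨a, fun z => ?_⟩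
        obtain ⟨u, hu, hune⟩ := hA z
        exact ⟨u, Finset.mem_erase.mpr ⟨hune, Finset.mem_univ u⟩, hu⟩
      · push_neg at hA
        obtain ⟨w, hw⟩ := hA
        have hvw : v ≠ w := by
          intro hvw
          exact hab (hw b (hvw ▸ hvb.symm)).symm
        refine ⟨w, fun z => ?_⟩
        by_cases hz : z = a
        · exact ⟨v, Finset.mem_erase.mpr ⟨hvw, Finset.mem_univ v⟩, hz ▸ hva⟩
        · obtain ⟨u, hu⟩ := h z
          have huw : u ≠ w := by
            intro huw
            exact hz (hw z (huw ▸ hu).symm)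
          exact ⟨u, Finset.mem_erase.mpr ⟨huw, Finset.mem_univ u⟩, hu⟩
    obtain ⟨x, hxtd⟩ := hx
    have hle : gammaT G ≤ (Finset.univ.erase x).card := gammaT_le G hxtd
    have hcard' : (Finset.univ.erase x).card = Fintype.card V - 1 := by
      rw [Finset.card_erase_of_mem (Finset.mem_univ x), Finset.card_univ]
    have hVpos : 0 < Fintype.card V := Fintype.card_pos_iff.mpr ⟨v⟩
    omega
  · -- backward direction
    intro hdeg
    have honly : ∀ S : Finset V, TotalDominating G S → ∀ v, v ∈ S := by
      intro S hS v
      obtain ⟨w, hw⟩ := h v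
      have hfin : ({u | G.Adj w u} : Set V).Finite := Set.toFinite _
      obtain ⟨a, haeq⟩ := Set.ncard_eq_one.mp (hdeg w)
      have hva : v ∈ ({u | G.Adj w u} : Set V) := hw
      obtain ⟨u, huS, hadj⟩ := hS w
      have hua : u ∈ ({u | G.Adj w u} : Set V) := hadj.symm
      rw [haeq] at hva hua
      have : u = v := by
        simp only [Set.mem_singleton_iff] at hva hua
        rw [hua, hva]
      exact this ▸ huS
    have hgt : gammaT G = Fintype.card V := by
      have hS0univ : S0 = Finset.univ := Finset.eq_univ_iff_forall.mpr (honly S0 hS0)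
      rw [← hS0card, hS0univ, Finset.card_univ]
    have hone : IsTRDF G (fun _ => 1) := by
      refine ⟨fun _ => by norm_num, fun v h0 => by simp at h0, fun v _ => ?_⟩
      obtain ⟨u, hu⟩ := h v
      exact ⟨u, hu, by norm_num⟩
    have hle : gammaTR G ≤ Fintype.card V := by
      have := gammaTR_le G hone
      simpa using this
    have := h1
    omega
end

section
/- Let G be a connected graph of order n ≥ 3. Then γ_tR(G) = γ_t(G) + 1 if and only if G has a universal vertex (a vertex adjacent to all other vertices). -/
open SimpleGraph Finset

variable {V : Type*}

lemma walk_to_dist2 (G : SimpleGraph V) (v : V) :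
    ∀ (u : V) (_ : G.Walk u v), u ≠ v → ¬ G.Adj v u →
      ∃ m z, m ≠ v ∧ ¬ G.Adj v m ∧ G.Adj v z ∧ G.Adj z m := by
  intro u w
  induction w with
  | nil => intro h _; exact absurd rfl h
  | @cons a b c h p ih =>
    intro hne hnadj
    by_cases hb : b = c
    · subst hb; exact absurd h.symm hnadj
    · by_cases hbv : G.Adj c b
      · exact ⟨a, b, hne, hnadj, hbv, h.symm⟩
      · exact ih hb hbv

lemma ex_adj (G : SimpleGraph V) [Fintype V] (hconn : G.Connected)
    (h2 : 2 ≤ Fintype.card V) (x : V) : ∃ y, G.Adj x y := by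
  obtain ⟨y, hy⟩ := Fintype.exists_ne_of_one_lt_card (by omega) x
  obtain ⟨w⟩ := hconn.preconnected x y
  cases w with
  | nil => exact absurd rfl hy.symm
  | cons h p => exact ⟨_, h⟩

/-- Key lemma: if `v` is not universal, there is a total dominating set of size
`≤ |M| + 1` where `M ⊇ V ∖ N[v]`. -/
lemma key_lemma (G : SimpleGraph V) [Fintype V] (hconn : G.Connected)
    (h3 : 3 ≤ Fintype.card V) (v u0 : V) (hu0 : u0 ≠ v) (hnadj : ¬ G.Adj v u0)
    (M : Finset V) (hM : ∀ w, w ≠ v → ¬ G.Adj v w → w ∈ M) :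
    ∃ T : Finset V, TotalDominating G T ∧ T.card ≤ M.card + 1 := by
  classical
  obtain ⟨w⟩ := hconn.preconnected u0 v
  obtain ⟨m, z, hmv, hmadj, hvz, hzm⟩ := walk_to_dist2 G v u0 w hu0 hnadj
  have hnb : ∀ x : V, ∃ y, G.Adj x y := ex_adj G hconn (by omega)
  set h : V → V := fun x => if x = m then z else Classical.choose (hnb x) with hh
  have hhadj : ∀ x, G.Adj x (h x) := by
    intro x
    simp only [hh]
    split
    · next heq => subst heq; exact hzm.symm
    · exact Classical.choose_spec (hnb x)
  refine ⟨insert v (M.image h), ?_, ?_⟩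
  · intro x
    by_cases hxv : x = v
    · subst hxv
      refine ⟨h m, ?_, ?_⟩
      · exact mem_insert_of_mem (mem_image.mpr ⟨m, hM m hmv hmadj, rfl⟩)
      · have : h m = z := by simp [hh]
        rw [this]; exact hvz.symm
    · by_cases hadj : G.Adj v x
      · exact ⟨v, mem_insert_self _ _, hadj⟩
      · exact ⟨h x, mem_insert_of_mem (mem_image.mpr ⟨x, hM x hxv hadj, rfl⟩),
          (hhadj x).symm⟩
  · have h1 : (M.image h).card ≤ M.card := card_image_le
    have h2 : (insert v (M.image h)).card ≤ (M.image h).card + 1 :=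
      card_insert_le v (M.image h)
    omega

theorem stmt3 (G : SimpleGraph V) [Fintype V] (hconn : G.Connected)
    (hn : 3 ≤ Fintype.card V) :
    gammaTR G = gammaT G + 1 ↔ ∃ v : V, ∀ u : V, u ≠ v → G.Adj v u := by
  classical
  have h2 : 2 ≤ Fintype.card V := by omega
  constructor
  · intro h
    -- an optimal TRDF exists
    have hTRne : {n | ∃ f : V → ℕ, IsTRDF G f ∧ ∑ v, f v = n}.Nonempty := by
      refine ⟨_, (fun _ => 2), ⟨fun _ => le_refl 2, fun v h0 => absurd h0 (by norm_num), ?_⟩, rfl⟩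
      intro x _
      obtain ⟨y, hy⟩ := ex_adj G hconn h2 x
      exact ⟨y, hy.symm, by norm_num⟩
    obtain ⟨f, hf, hfs⟩ := Nat.sInf_mem hTRne
    have hfs' : ∑ x, f x = gammaT G + 1 := by rw [← h]; exact hfs
    clear hfs
    set P := univ.filter (fun x => 0 < f x) with hPdef
    set P2 := univ.filter (fun x => f x = 2) with hP2def
    have hPT : TotalDominating G P := by
      intro x
      rcases Nat.eq_zero_or_pos (f x) with h0 | hp
      · obtain ⟨u, hu, hu2⟩ := hf.2.1 x h0
        exact ⟨u, mem_filter.mpr ⟨mem_univ u, show 0 < f u by omega⟩, hu⟩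
      · obtain ⟨u, hu, hup⟩ := hf.2.2 x hp
        exact ⟨u, mem_filter.mpr ⟨mem_univ u, hup⟩, hu⟩
    have hγP : gammaT G ≤ P.card := Nat.sInf_le ⟨P, hPT, rfl⟩
    have hcount : P.card + P2.card ≤ ∑ x, f x := by
      rw [hPdef, hP2def, card_filter, card_filter, ← sum_add_distrib]
      refine sum_le_sum fun x _ => ?_
      show (if 0 < f x then 1 else 0) + (if f x = 2 then 1 else 0) ≤ f x
      split_ifs <;> omega
    by_cases hv2 : ∃ v, f v = 2
    · obtain ⟨v, hv⟩ := hv2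
      refine ⟨v, fun u hu => ?_⟩
      by_contra hadj
      have hvP2 : v ∈ P2 := mem_filter.mpr ⟨mem_univ _, hv⟩
      have hP2pos : 1 ≤ P2.card := card_pos.mpr ⟨v, hvP2⟩
      have hP2card : P2.card ≤ 1 := by omega
      have huniq : ∀ w, f w = 2 → w = v := fun w hw =>
        card_le_one.mp hP2card w (mem_filter.mpr ⟨mem_univ _, hw⟩) v hvP2
      obtain ⟨T, hT, hTc⟩ := key_lemma G hconn hn v u hu hadj
        (univ.filter (fun w => w ≠ v ∧ ¬ G.Adj v w))
        (fun w h1 h2 => mem_filter.mpr ⟨mem_univ _, h1, h2⟩)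
      set M := univ.filter (fun w => w ≠ v ∧ ¬ G.Adj v w) with hMdef
      have hγT : gammaT G ≤ M.card + 1 := le_trans (Nat.sInf_le ⟨T, hT, rfl⟩) hTc
      have hMP : M ⊆ P := by
        intro m hm
        have hm' := mem_filter.mp hm
        refine mem_filter.mpr ⟨mem_univ _, show 0 < f m from ?_⟩
        rcases Nat.eq_zero_or_pos (f m) with h0 | hp
        · obtain ⟨w, hw, hw2⟩ := hf.2.1 m h0
          exact absurd (huniq w hw2 ▸ hw) hm'.2.2
        · exact hp
      obtain ⟨z, hzadj, hzpos⟩ := hf.2.2 v (by omega)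
      have hvP : v ∈ P := mem_filter.mpr ⟨mem_univ _, show 0 < f v by omega⟩
      have hzP : z ∈ P := mem_filter.mpr ⟨mem_univ _, hzpos⟩
      have hvM : v ∉ M := fun hm => (mem_filter.mp hm).2.1 rfl
      have hzM : z ∉ M := fun hm => (mem_filter.mp hm).2.2 hzadj.symm
      have hzv : z ≠ v := hzadj.ne
      have hv' : v ∉ insert z M := by
        intro hvm
        rcases mem_insert.mp hvm with h' | h'
        · exact hzv h'.symm
        · exact hvM h'
      have hsub : insert v (insert z M) ⊆ P := by
        intro a ha
        rcases mem_insert.mp ha with rfl | ha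
        · exact hvP
        rcases mem_insert.mp ha with rfl | ha
        · exact hzP
        · exact hMP ha
      have hcard2 : (insert v (insert z M)).card = M.card + 2 := by
        rw [card_insert_of_notMem hv', card_insert_of_notMem hzM]
      have hcard3 : M.card + 2 ≤ P.card := hcard2 ▸ card_le_card hsub
      omega
    · push_neg at hv2
      have hall1 : ∀ x, f x = 1 := by
        intro x
        have hle := hf.1 x
        have hne2 := hv2 x
        have hne0 : f x ≠ 0 := by
          intro h0
          obtain ⟨w, _, hw2⟩ := hf.2.1 x h0
          exact hv2 w hw2
        omega
      have hsumn : ∑ x, f x = Fintype.card V := by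
        simp [hall1]
      have hγn : gammaT G + 1 = Fintype.card V := by rw [← hfs', hsumn]
      by_contra hno
      push_neg at hno
      have hne : Nonempty V := Fintype.card_pos_iff.mp (by omega)
      obtain ⟨x⟩ := hne
      obtain ⟨y, hxy⟩ := ex_adj G hconn h2 x
      have htwo : ∃ c a b : V, a ≠ b ∧ G.Adj c a ∧ G.Adj c b := by
        by_cases h1 : ∃ y', G.Adj x y' ∧ y' ≠ y
        · obtain ⟨y', hy1, hy2⟩ := h1; exact ⟨x, y', y, hy2, hy1, hxy⟩
        · by_cases hh2 : ∃ w, G.Adj y w ∧ w ≠ x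
          · obtain ⟨w, hw1, hw2⟩ := hh2; exact ⟨y, w, x, hw2, hw1, hxy.symm⟩
          · exfalso
            push_neg at h1 hh2
            have hclosed : ∀ (a b : V), G.Walk a b → (a = x ∨ a = y) → (b = x ∨ b = y) := by
              intro a b w
              induction w with
              | nil => exact id
              | @cons a' b' c' hadj p ih =>
                intro hor
                apply ih
                rcases hor with rfl | rfl
                · right; exact h1 _ hadj
                · left; exact hh2 _ hadj
            have hz : ∃ z : V, z ≠ x ∧ z ≠ y := by
              by_contra hzz
              push_neg at hzz
              have hsub : (univ : Finset V) ⊆ {x, y} := by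
                intro z _
                rcases eq_or_ne z x with rfl | hne'
                · exact mem_insert_self _ _
                · rw [hzz z hne']; exact mem_insert_of_mem (mem_singleton_self _)
              have hc := card_le_card hsub
              rw [card_univ] at hc
              have hxy2 : ({x, y} : Finset V).card ≤ 2 := card_insert_le _ _
              omega
            obtain ⟨z, hzx, hzy⟩ := hz
            obtain ⟨w⟩ := hconn.preconnected x z
            rcases hclosed x z w (Or.inl rfl) with rfl | rfl
            · exact hzx rfl
            · exact hzy rfl
      obtain ⟨c, a, b, hab, hca, hcb⟩ := htwo
      obtain ⟨u0, hu0, hu0adj⟩ := hno c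
      obtain ⟨T, hT, hTc⟩ := key_lemma G hconn hn c u0 hu0 hu0adj
        (univ.filter (fun w => w ≠ c ∧ ¬ G.Adj c w))
        (fun w h1' h2' => mem_filter.mpr ⟨mem_univ _, h1', h2'⟩)
      set M := univ.filter (fun w => w ≠ c ∧ ¬ G.Adj c w) with hMdef
      have hγT : gammaT G ≤ M.card + 1 := le_trans (Nat.sInf_le ⟨T, hT, rfl⟩) hTc
      have haM : a ∉ M := fun hm => (mem_filter.mp hm).2.2 hca
      have hbM : b ∉ M := fun hm => (mem_filter.mp hm).2.2 hcb
      have hcM : c ∉ M := fun hm => (mem_filter.mp hm).2.1 rfl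
      have ha1 : a ∉ insert b M := by
        intro h'
        rcases mem_insert.mp h' with h' | h'
        · exact hab h'
        · exact haM h'
      have hc1 : c ∉ insert a (insert b M) := by
        intro h'
        rcases mem_insert.mp h' with h' | h'
        · exact hca.ne h'
        rcases mem_insert.mp h' with h' | h'
        · exact hcb.ne h'
        · exact hcM h'
      have hcard3 : (insert c (insert a (insert b M))).card = M.card + 3 := by
        rw [card_insert_of_notMem hc1, card_insert_of_notMem ha1,
          card_insert_of_notMem hbM]
      have hle : (insert c (insert a (insert b M))).card ≤ Fintype.card V := by
        rw [← card_univ]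
        exact card_le_card (subset_univ _)
      omega
  · rintro ⟨v, hv⟩
    obtain ⟨u, hu⟩ := Fintype.exists_ne_of_one_lt_card (by omega) v
    have hadj : G.Adj v u := hv u hu
    have hTDS : TotalDominating G {v, u} := by
      intro x
      by_cases hxv : x = v
      · refine ⟨u, by simp, ?_⟩
        rw [hxv]; exact hadj.symm
      · exact ⟨v, by simp, hv x hxv⟩
    have hcardvu : ({v, u} : Finset V).card = 2 := card_pair hadj.ne
    have hT2 : gammaT G ≤ 2 := Nat.sInf_le ⟨{v, u}, hTDS, hcardvu⟩
    have hT2' : 2 ≤ gammaT G := by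
      refine le_csInf ⟨2, {v, u}, hTDS, hcardvu⟩ ?_
      rintro n ⟨S, hS, rfl⟩
      obtain ⟨a, ha, -⟩ := hS v
      obtain ⟨w, hw, hwa⟩ := hS a
      exact one_lt_card.mpr ⟨w, hw, a, ha, hwa.ne⟩
    set f : V → ℕ := fun x => (if x = v then 2 else 0) + (if x = u then 1 else 0) with hfdef
    have hvu : v ≠ u := hadj.ne
    have hfv : f v = 2 := by simp [hfdef, hvu]
    have hfu : f u = 1 := by simp [hfdef, hu]
    have hf0 : ∀ x, x ≠ v → x ≠ u → f x = 0 := fun x hh1 hh2 => by simp [hfdef, hh1, hh2]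
    have hfTRDF : IsTRDF G f := by
      refine ⟨?_, ?_, ?_⟩
      · intro x
        rcases eq_or_ne x v with rfl | hx1
        · rw [hfv]
        · rcases eq_or_ne x u with rfl | hx2
          · rw [hfu]; omega
          · rw [hf0 x hx1 hx2]; omega
      · intro x hx
        have hxv : x ≠ v := by
          intro h'; rw [h', hfv] at hx; omega
        exact ⟨v, hv x hxv, hfv⟩
      · intro x hx
        by_cases hh1 : x = v
        · subst hh1; exact ⟨u, hadj.symm, by rw [hfu]; omega⟩
        · by_cases hh2 : x = u
          · subst hh2; exact ⟨v, hadj, by rw [hfv]; omega⟩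
          · rw [hf0 x hh1 hh2] at hx; omega
    have hsumf : ∑ x, f x = 3 := by
      rw [hfdef]
      rw [sum_add_distrib]
      rw [Finset.sum_ite_eq' univ v (fun _ => 2), Finset.sum_ite_eq' univ u (fun _ => 1)]
      simp
    have hTR3 : gammaTR G ≤ 3 := Nat.sInf_le ⟨f, hfTRDF, hsumf⟩
    have hTR3' : 3 ≤ gammaTR G := by
      refine le_csInf ⟨3, f, hfTRDF, hsumf⟩ ?_
      rintro n ⟨g, hg, rfl⟩
      by_cases hz : ∃ w, g w = 0
      · obtain ⟨w, hw⟩ := hz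
        obtain ⟨p, hpw, hp2⟩ := hg.2.1 w hw
        obtain ⟨q, hqp, hq⟩ := hg.2.2 p (by omega)
        have hqp' : q ≠ p := hqp.ne
        have hsum2 : g p + g q ≤ ∑ x, g x := by
          have hss := sum_le_sum_of_subset (subset_univ ({p, q} : Finset V)) (f := g)
          rwa [sum_pair hqp'.symm] at hss
        omega
      · push_neg at hz
        have hge1 : ∀ x ∈ univ, 1 ≤ g x := fun x _ => Nat.one_le_iff_ne_zero.mpr (hz x)
        have hge := sum_le_sum hge1
        rw [sum_const, card_univ, smul_eq_mul, mul_one] at hge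
        omega
    omega
end

section
/- For a graph G of order n ≥ 3 with no isolated vertices, γ_tR(G) = 3 if and only if G has a universal vertex. -/
open SimpleGraph Finset

variable {V : Type*}

/-!
A total Roman dominating function on at least three vertices has weight at least 3: a vertex of
weight 0 has a neighbour of weight 2, which in turn has a positive neighbour; otherwise all weights
are positive. A universal vertex `v` attains 3 by giving 2 to `v` and 1 to any other vertex.
Conversely, take a function of weight 3. If some `v` has weight 2, the other vertices of weight 0
can only be dominated by `v`, and the single remaining vertex of weight 1 must be the positive
neighbour of `v`. Otherwise no vertex can have weight 0, so all weights are 1: the graph has three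
vertices and no isolated vertex, hence a universal vertex.
-/

variable {G : SimpleGraph V} {f : V → ℕ}

lemma add_le_sum_of_ne [Fintype V] (f : V → ℕ) {x y : V} (hxy : x ≠ y) :
    f x + f y ≤ ∑ v, f v := by
  classical
  simpa [sum_pair hxy] using sum_le_sum_of_subset (f := f) (subset_univ {x, y})

lemma add_add_le_sum_of_ne [Fintype V] (f : V → ℕ) {x y z : V} (hxy : x ≠ y) (hxz : x ≠ z)
    (hyz : y ≠ z) : f x + f y + f z ≤ ∑ v, f v := by
  classical
  have hsum := sum_le_sum_of_subset (f := f) (subset_univ {x, y, z})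
  rwa [sum_insert (by simp [hxy, hxz]), sum_pair hyz, ← add_assoc] at hsum

lemma exists_universal_of_card_eq_three [Fintype V] (hV : Fintype.card V = 3)
    (hG : NoIsolated G) : ∃ v : V, ∀ u : V, u ≠ v → G.Adj v u := by
  obtain ⟨c⟩ : Nonempty V := Fintype.card_pos_iff.mp (by omega)
  obtain ⟨d, hdc⟩ := hG c
  by_cases hd : ∀ u, u ≠ d → G.Adj d u
  · exact ⟨d, hd⟩
  push Not at hd
  obtain ⟨e, hed, hde⟩ := hd
  have hce : c ≠ e := by rintro rfl; exact hde hdc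
  have hcde : ∀ x : V, x = c ∨ x = d ∨ x = e := by
    classical
    have huniv : ({c, d, e} : Finset V) = univ :=
      eq_univ_of_card _ (hV ▸ card_eq_three.mpr ⟨c, d, e, hdc.ne.symm, hce, hed.symm, rfl⟩)
    simpa [Finset.ext_iff] using huniv
  obtain ⟨x, hxe⟩ := hG e
  have hc_adj_e : G.Adj c e := by
    rcases hcde x with rfl | rfl | rfl
    · exact hxe
    · exact absurd hxe hde
    · exact absurd hxe (G.loopless.irrefl x)
  refine ⟨c, fun u huc => ?_⟩
  rcases hcde u with rfl | rfl | rfl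
  · exact absurd rfl huc
  · exact hdc.symm
  · exact hc_adj_e

namespace IsTRDF

lemma three_le_sum [Fintype V] (hf : IsTRDF G f) (hn : 3 ≤ Fintype.card V) :
    3 ≤ ∑ v, f v := by
  obtain ⟨-, hzero, hpos⟩ := hf
  by_cases hz : ∃ z, f z = 0
  · obtain ⟨z, hz⟩ := hz
    obtain ⟨u, -, hu⟩ := hzero z hz
    obtain ⟨x, hxu, hx⟩ := hpos u (by omega)
    have := add_le_sum_of_ne f hxu.ne
    omega
  · push Not at hz
    calc 3 ≤ Fintype.card V := hn
      _ = ∑ _v : V, 1 := Fintype.card_eq_sum_ones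
      _ ≤ ∑ v, f v := sum_le_sum fun v _ => Nat.one_le_iff_ne_zero.mpr (hz v)

lemma adj_of_eq_two [Fintype V] (hf : IsTRDF G f) (hsum : ∑ v, f v = 3) {v : V}
    (hv : f v = 2) : ∀ u, u ≠ v → G.Adj v u := by
  obtain ⟨-, hzero, hpos⟩ := hf
  intro u huv
  rcases Nat.eq_zero_or_pos (f u) with hu | hu
  · obtain ⟨x, hxu, hx⟩ := hzero u hu
    obtain rfl : x = v := by
      by_contra hxv
      have := add_le_sum_of_ne f hxv
      omega
    exact hxu
  · obtain ⟨x, hxv, hx⟩ := hpos v (by omega)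
    obtain rfl : x = u := by
      by_contra hxu
      have := add_add_le_sum_of_ne f huv.symm hxv.ne.symm (Ne.symm hxu)
      omega
    exact hxv.symm

lemma eq_one_of_forall_ne_two (hf : IsTRDF G f) (h2 : ∀ v, f v ≠ 2) (v : V) : f v = 1 := by
  obtain ⟨hle, hzero, -⟩ := hf
  have hv0 : f v ≠ 0 := fun hv => by
    obtain ⟨x, -, hx⟩ := hzero v hv
    exact h2 x hx
  have := hle v
  have := h2 v
  omega

lemma exists_universal_of_sum_eq_three [Fintype V] (hf : IsTRDF G f) (hsum : ∑ v, f v = 3) :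
    ∃ v : V, ∀ u : V, u ≠ v → G.Adj v u := by
  by_cases h2 : ∃ v, f v = 2
  · obtain ⟨v, hv⟩ := h2
    exact ⟨v, hf.adj_of_eq_two hsum hv⟩
  push Not at h2
  have hone := hf.eq_one_of_forall_ne_two h2
  have hV : Fintype.card V = 3 := by simpa [hone] using hsum
  exact exists_universal_of_card_eq_three hV fun v =>
    (hf.2.2 v (by simp [hone])).imp fun _ hu => hu.1

end IsTRDF

lemma isTRDF_single_add_single [DecidableEq V] {v w : V} (hv : ∀ u, u ≠ v → G.Adj v u)
    (hwv : w ≠ v) : IsTRDF G (Pi.single v 2 + Pi.single w 1) := by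
  refine ⟨fun u => ?_, fun u hu => ?_, fun u _ => ?_⟩
  · by_cases huv : u = v <;> by_cases huw : u = w <;> simp_all
  · have huv : u ≠ v := by rintro rfl; simp at hu
    exact ⟨v, hv u huv, by simp [hwv.symm]⟩
  · by_cases huv : u = v
    · subst huv
      exact ⟨w, (hv w hwv).symm, by simp [hwv]⟩
    · exact ⟨v, hv u huv, by simp [hwv.symm]⟩

lemma sum_single_add_single [Fintype V] [DecidableEq V] (v w : V) :
    ∑ u, (Pi.single v 2 + Pi.single w 1 : V → ℕ) u = 3 := by
  simp [sum_add_distrib]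

lemma exists_isTRDF_sum_eq_gammaTR [Fintype V] (hG : gammaTR G ≠ 0) :
    ∃ f : V → ℕ, IsTRDF G f ∧ ∑ v, f v = gammaTR G :=
  Nat.sInf_mem <| Set.nonempty_iff_ne_empty.mpr fun hempty =>
    hG (Nat.sInf_eq_zero.mpr (.inr hempty))

lemma gammaTR_eq_sum_of_le [Fintype V] (hf : IsTRDF G f)
    (hmin : ∀ g, IsTRDF G g → ∑ v, f v ≤ ∑ v, g v) : gammaTR G = ∑ v, f v :=
  le_antisymm (Nat.sInf_le ⟨f, hf, rfl⟩)
    (le_csInf ⟨_, f, hf, rfl⟩ (by rintro _ ⟨g, hg, rfl⟩; exact hmin g hg))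

theorem stmt4_general (G : SimpleGraph V) [Fintype V]
    (hn : 3 ≤ Fintype.card V) :
    gammaTR G = 3 ↔ ∃ v : V, ∀ u : V, u ≠ v → G.Adj v u := by
  classical
  constructor
  · intro h3
    obtain ⟨f, hf, hsum⟩ := exists_isTRDF_sum_eq_gammaTR (G := G) (by omega)
    exact hf.exists_universal_of_sum_eq_three (hsum.trans h3)
  · rintro ⟨v, hv⟩
    obtain ⟨w, hwv⟩ := Fintype.exists_ne_of_one_lt_card (by omega) v
    have hweight := sum_single_add_single v w
    rw [gammaTR_eq_sum_of_le (isTRDF_single_add_single hv hwv) fun g hg => ?_, hweight]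
    exact hweight.trans_le (hg.three_le_sum hn)

theorem stmt4 (G : SimpleGraph V) [Fintype V] (h : NoIsolated G)
    (hn : 3 ≤ Fintype.card V) :
    gammaTR G = 3 ↔ ∃ v : V, ∀ u : V, u ≠ v → G.Adj v u :=
  stmt4_general G hn
end

section
/- If G is a connected graph of order n ≥ 3, then γ_tR(G) ∈ {3,4} if and only if γ_t(G) = 2. Moreover, γ(G) = 1 when γ_tR(G) = 3, and γ(G) = 2 when γ_tR(G) = 4. -/
open SimpleGraph Finset

variable {V : Type*}

namespace TRDFaux

def adj4 (a b c d e f : Bool) : Fin 4 → Fin 4 → Bool := fun i j =>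
  match i.val, j.val with
  | 0,1 => a | 1,0 => a
  | 0,2 => b | 2,0 => b
  | 0,3 => c | 3,0 => c
  | 1,2 => d | 2,1 => d
  | 1,3 => e | 3,1 => e
  | 2,3 => f | 3,2 => f
  | _,_ => false

def adj3 (a b c : Bool) : Fin 3 → Fin 3 → Bool := fun i j =>
  match i.val, j.val with
  | 0,1 => a | 1,0 => a
  | 0,2 => b | 2,0 => b
  | 1,2 => c | 2,1 => c
  | _,_ => false

theorem dec4 : ∀ a b c d e f : Bool, (∀ i j : Fin 4, ∃ x y, (i = x ∨ adj4 a b c d e f i x = true) ∧ (x = y ∨ adj4 a b c d e f x y = true) ∧ (y = j ∨ adj4 a b c d e f y j = true)) →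
    ∃ u v, adj4 a b c d e f u v = true ∧ ∀ x, adj4 a b c d e f u x = true ∨ adj4 a b c d e f v x = true := by decide

theorem dec3 : ∀ a b c : Bool, (∀ i j : Fin 3, ∃ x y, (i = x ∨ adj3 a b c i x = true) ∧ (x = y ∨ adj3 a b c x y = true) ∧ (y = j ∨ adj3 a b c y j = true)) →
    ∃ u v, adj3 a b c u v = true ∧ ∀ x, adj3 a b c u x = true ∨ adj3 a b c v x = true := by decide

theorem dec3' : ∀ a b c : Bool, (∀ i j : Fin 3, ∃ x y, (i = x ∨ adj3 a b c i x = true) ∧ (x = y ∨ adj3 a b c x y = true) ∧ (y = j ∨ adj3 a b c y j = true)) →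
    ∃ u, ∀ x, u = x ∨ adj3 a b c u x = true := by decide

lemma adj4_eq (A : Fin 4 → Fin 4 → Bool) (hs : ∀ i j, A i j = A j i) (hi : ∀ i, A i i = false) :
    ∀ i j, A i j = adj4 (A 0 1) (A 0 2) (A 0 3) (A 1 2) (A 1 3) (A 2 3) i j := by
  intro i j
  fin_cases i <;> fin_cases j <;> first | exact hi _ | rfl | exact hs _ _

lemma adj3_eq (A : Fin 3 → Fin 3 → Bool) (hs : ∀ i j, A i j = A j i) (hi : ∀ i, A i i = false) :
    ∀ i j, A i j = adj3 (A 0 1) (A 0 2) (A 1 2) i j := by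
  intro i j
  fin_cases i <;> fin_cases j <;> first | exact hi _ | rfl | exact hs _ _

variable {V : Type*}

lemma step_chain (G : SimpleGraph V) [Fintype V] (hle : Fintype.card V ≤ 4) {i j : V}
    (h : G.Reachable i j) :
    ∃ x y, (i = x ∨ G.Adj i x) ∧ (x = y ∨ G.Adj x y) ∧ (y = j ∨ G.Adj y j) := by
  classical
  obtain ⟨w⟩ := h
  let p := w.toPath
  have hlen : p.1.length < 4 := lt_of_lt_of_le p.2.length_lt hle
  have step : ∀ k, p.1.getVert k = p.1.getVert (k+1) ∨ G.Adj (p.1.getVert k) (p.1.getVert (k+1)) := by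
    intro k
    rcases lt_or_ge k p.1.length with h | h
    · exact Or.inr (p.1.adj_getVert_succ h)
    · rw [p.1.getVert_of_length_le h, p.1.getVert_of_length_le (le_trans h (Nat.le_succ _))]
      exact Or.inl rfl
  refine ⟨p.1.getVert 1, p.1.getVert 2, ?_, step 1, ?_⟩
  · have := step 0; rwa [p.1.getVert_zero] at this
  · have := step 2
    rwa [show p.1.getVert 3 = j from p.1.getVert_of_length_le (by omega)] at this

section

variable (G : SimpleGraph V) [Fintype V]

/-- Build the bool matrix of `G` under an equivalence with `Fin n`. -/
noncomputable def mat {n : ℕ} (e : V ≃ Fin n) : Fin n → Fin n → Bool :=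
  fun i j => @decide (G.Adj (e.symm i) (e.symm j)) (Classical.propDecidable _)

lemma mat_iff {n : ℕ} (e : V ≃ Fin n) (i j : Fin n) :
    mat G e i j = true ↔ G.Adj (e.symm i) (e.symm j) := by
  simp [mat]

lemma mat_symm {n : ℕ} (e : V ≃ Fin n) (i j : Fin n) : mat G e i j = mat G e j i := by
  simp only [mat]
  exact decide_eq_decide.mpr (adj_comm _ _ _)

lemma mat_irrefl {n : ℕ} (e : V ≃ Fin n) (i : Fin n) : mat G e i i = false := by
  simp [mat]

lemma mat_chain {n : ℕ} (e : V ≃ Fin n) (hn : n ≤ 4) (hconn : G.Connected) :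
    ∀ i j : Fin n, ∃ x y, (i = x ∨ mat G e i x = true) ∧ (x = y ∨ mat G e x y = true) ∧
      (y = j ∨ mat G e y j = true) := by
  intro i j
  have hcard : Fintype.card V ≤ 4 := by rw [Fintype.card_eq_nat_card, Nat.card_eq_of_equiv_fin e]; exact hn
  obtain ⟨x, y, h1, h2, h3⟩ := step_chain G hcard (hconn.preconnected (e.symm i) (e.symm j))
  refine ⟨e x, e y, ?_, ?_, ?_⟩
  · rcases h1 with h | h
    · exact Or.inl (by rw [← h]; exact (e.apply_symm_apply i).symm)
    · exact Or.inr ((mat_iff G e _ _).mpr (by rwa [e.symm_apply_apply]))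
  · rcases h2 with h | h
    · exact Or.inl (by rw [h])
    · exact Or.inr ((mat_iff G e _ _).mpr (by rwa [e.symm_apply_apply, e.symm_apply_apply]))
  · rcases h3 with h | h
    · exact Or.inl (by rw [h, e.apply_symm_apply])
    · exact Or.inr ((mat_iff G e _ _).mpr (by rwa [e.symm_apply_apply]))

lemma total_pair_small (hconn : G.Connected)
    (hcard : Fintype.card V = 3 ∨ Fintype.card V = 4) :
    ∃ u v, G.Adj u v ∧ ∀ x, G.Adj u x ∨ G.Adj v x := by
  classical
  rcases hcard with hcard | hcard
  · let e := Fintype.equivFinOfCardEq hcard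
    have hch := mat_chain G e (by norm_num) hconn
    have heq := adj3_eq (mat G e) (mat_symm G e) (mat_irrefl G e)
    obtain ⟨u, v, huv, hall⟩ := dec3 _ _ _ (fun i j => by
      obtain ⟨x, y, h1, h2, h3⟩ := hch i j
      exact ⟨x, y, by rw [← heq]; exact h1, by rw [← heq]; exact h2, by rw [← heq]; exact h3⟩)
    rw [← heq] at huv
    refine ⟨e.symm u, e.symm v, (mat_iff G e _ _).mp huv, fun x => ?_⟩
    rcases hall (e x) with h | h <;> rw [← heq] at h <;>
      [left; right] <;>
      · have := (mat_iff G e _ _).mp h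
        rwa [e.symm_apply_apply] at this
  · let e := Fintype.equivFinOfCardEq hcard
    have hch := mat_chain G e (by norm_num) hconn
    have heq := adj4_eq (mat G e) (mat_symm G e) (mat_irrefl G e)
    obtain ⟨u, v, huv, hall⟩ := dec4 _ _ _ _ _ _ (fun i j => by
      obtain ⟨x, y, h1, h2, h3⟩ := hch i j
      exact ⟨x, y, by rw [← heq]; exact h1, by rw [← heq]; exact h2, by rw [← heq]; exact h3⟩)
    rw [← heq] at huv
    refine ⟨e.symm u, e.symm v, (mat_iff G e _ _).mp huv, fun x => ?_⟩
    rcases hall (e x) with h | h <;> rw [← heq] at h <;>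
      [left; right] <;>
      · have := (mat_iff G e _ _).mp h
        rwa [e.symm_apply_apply] at this

lemma universal_of_card3 (hconn : G.Connected) (hcard : Fintype.card V = 3) :
    ∃ u, ∀ x, u = x ∨ G.Adj u x := by
  classical
  let e := Fintype.equivFinOfCardEq hcard
  have hch := mat_chain G e (by norm_num) hconn
  have heq := adj3_eq (mat G e) (mat_symm G e) (mat_irrefl G e)
  obtain ⟨u, hall⟩ := dec3' _ _ _ (fun i j => by
    obtain ⟨x, y, h1, h2, h3⟩ := hch i j
    exact ⟨x, y, by rw [← heq]; exact h1, by rw [← heq]; exact h2, by rw [← heq]; exact h3⟩)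
  refine ⟨e.symm u, fun x => ?_⟩
  rcases hall (e x) with h | h
  · exact Or.inl (by rw [h, e.symm_apply_apply])
  · rw [← heq] at h
    have := (mat_iff G e _ _).mp h
    rw [e.symm_apply_apply] at this
    exact Or.inr this

end


section Sums
variable [Fintype V] [DecidableEq V] (f : V → ℕ)

lemma sum2_le {a b : V} (hab : a ≠ b) : f a + f b ≤ ∑ v, f v := by
  have h : ∑ x ∈ ({a, b} : Finset V), f x = f a + f b := Finset.sum_pair hab
  have h2 := Finset.sum_le_sum_of_subset (Finset.subset_univ ({a, b} : Finset V)) (f := f)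
  omega

lemma sum3_le {a b c : V} (hab : a ≠ b) (hac : a ≠ c) (hbc : b ≠ c) :
    f a + f b + f c ≤ ∑ v, f v := by
  have h : ∑ x ∈ ({a, b, c} : Finset V), f x = f a + (f b + f c) := by
    rw [Finset.sum_insert (by simp [hab, hac]), Finset.sum_pair hbc]
  have h2 := Finset.sum_le_sum_of_subset (Finset.subset_univ ({a, b, c} : Finset V)) (f := f)
  omega

lemma sum4_le {a b c d : V} (hab : a ≠ b) (hac : a ≠ c) (had : a ≠ d) (hbc : b ≠ c)
    (hbd : b ≠ d) (hcd : c ≠ d) : f a + f b + f c + f d ≤ ∑ v, f v := by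
  have h : ∑ x ∈ ({a, b, c, d} : Finset V), f x = f a + (f b + (f c + f d)) := by
    rw [Finset.sum_insert (by simp [hab, hac, had]),
      Finset.sum_insert (by simp [hbc, hbd]), Finset.sum_pair hcd]
  have h2 := Finset.sum_le_sum_of_subset (Finset.subset_univ ({a, b, c, d} : Finset V)) (f := f)
  omega

end Sums

variable (G : SimpleGraph V) [Fintype V]

lemma all_one_of_no_two {f : V → ℕ} (hf : IsTRDF G f) (h2 : ∀ u, f u ≠ 2) : ∀ v, f v = 1 := by
  intro v
  obtain ⟨hle2, h0, _⟩ := hf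
  rcases Nat.eq_zero_or_pos (f v) with h | h
  · obtain ⟨y, _, hy2⟩ := h0 v h; exact absurd hy2 (h2 y)
  · have := hle2 v; have := h2 v; omega

lemma sum_card_of_all_one {f : V → ℕ} (h1 : ∀ v, f v = 1) :
    ∑ v, f v = Fintype.card V := by
  rw [Finset.sum_congr rfl (fun v _ => h1 v)]; simp

lemma trdf_ge3 (hn : 3 ≤ Fintype.card V) {f : V → ℕ} (hf : IsTRDF G f) : 3 ≤ ∑ v, f v := by
  classical
  by_cases h2 : ∃ u, f u = 2
  · obtain ⟨u, hu⟩ := h2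
    obtain ⟨w, hwu, hw⟩ := hf.2.2 u (by omega)
    have huw : u ≠ w := fun h => G.irrefl (h ▸ hwu)
    have := sum2_le f huw
    omega
  · push_neg at h2
    have := sum_card_of_all_one (all_one_of_no_two G hf h2)
    omega

lemma pair_lemma (hconn : G.Connected) (hn : 3 ≤ Fintype.card V) {f : V → ℕ}
    (hf : IsTRDF G f) (hsum : ∑ v, f v ≤ 4) :
    ∃ u v : V, u ≠ v ∧ ∀ x, G.Adj u x ∨ G.Adj v x := by
  classical
  obtain ⟨hle2, h0, hpos⟩ := hf
  by_cases h2 : ∃ u, f u = 2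
  · obtain ⟨u, hu⟩ := h2
    obtain ⟨w, hwu, hw⟩ := hpos u (by omega)
    have huw : u ≠ w := fun h => G.irrefl (h ▸ hwu)
    refine ⟨u, w, huw, fun x => ?_⟩
    by_cases hx0 : f x = 0
    · obtain ⟨y, hyx, hy2⟩ := h0 x hx0
      by_cases hyu : y = u
      · exact Or.inl (hyu ▸ hyx)
      by_cases hyw : y = w
      · exact Or.inr (hyw ▸ hyx)
      · exfalso
        have := sum3_le f huw (fun h => hyu h.symm) (fun h => hyw h.symm)
        omega
    · by_cases hxu : x = u
      · exact Or.inr (hxu ▸ hwu)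
      by_cases hxw : x = w
      · exact Or.inl (hxw ▸ hwu.symm)
      · obtain ⟨y, hyx, hy⟩ := hpos x (by omega)
        by_cases hyu : y = u
        · exact Or.inl (hyu ▸ hyx)
        by_cases hyw : y = w
        · exact Or.inr (hyw ▸ hyx)
        · exfalso
          have hxy : x ≠ y := fun h => G.irrefl (h ▸ hyx)
          have hx1 : 1 ≤ f x := Nat.pos_of_ne_zero hx0
          have := sum4_le f huw (fun h => hxu h.symm) (fun h => hyu h.symm)
            (fun h => hxw h.symm) (fun h => hyw h.symm) hxy
          omega
  · push_neg at h2
    have h1 := all_one_of_no_two G ⟨hle2, h0, hpos⟩ h2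
    have hcard := sum_card_of_all_one (V := V) h1
    obtain ⟨u, v, huv, hall⟩ := total_pair_small G hconn (by omega)
    exact ⟨u, v, huv.ne, hall⟩

end TRDFaux

open TRDFaux in
theorem stmt5 (G : SimpleGraph V) [Fintype V] (hconn : G.Connected)
    (hn : 3 ≤ Fintype.card V) :
    ((gammaTR G = 3 ∨ gammaTR G = 4) ↔ gammaT G = 2) ∧
      (gammaTR G = 3 → gamma G = 1) ∧ (gammaTR G = 4 → gamma G = 2) := by
  classical
  have hVne : Nonempty V := by rw [← Fintype.card_pos_iff]; omega
  have hnbr : ∀ v : V, ∃ u, G.Adj u v := by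
    intro v
    obtain ⟨u, hu⟩ := Fintype.exists_ne_of_one_lt_card (by omega) v
    obtain ⟨w⟩ := hconn.preconnected v u
    cases w with
    | nil => exact absurd rfl hu
    | cons h p => exact ⟨_, h.symm⟩
  have hTRne : {n | ∃ f : V → ℕ, IsTRDF G f ∧ ∑ v, f v = n}.Nonempty := by
    refine ⟨Fintype.card V, fun _ => 1, ⟨fun v => one_le_two, fun v h => absurd h one_ne_zero,
      fun v _ => ?_⟩, by simp⟩
    obtain ⟨u, hu⟩ := hnbr v
    exact ⟨u, hu, one_pos⟩
  have hTne : {n | ∃ S : Finset V, TotalDominating G S ∧ S.card = n}.Nonempty := by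
    refine ⟨_, Finset.univ, fun v => ?_, rfl⟩
    obtain ⟨u, hu⟩ := hnbr v
    exact ⟨u, Finset.mem_univ u, hu⟩
  have hDne : {n | ∃ S : Finset V, Dominating G S ∧ S.card = n}.Nonempty :=
    ⟨_, Finset.univ, fun v hv => absurd (Finset.mem_univ v) hv, rfl⟩
  have hTRmem : gammaTR G ∈ {n | ∃ f : V → ℕ, IsTRDF G f ∧ ∑ v, f v = n} :=
    Nat.sInf_mem hTRne
  have hTmem : gammaT G ∈ {n | ∃ S : Finset V, TotalDominating G S ∧ S.card = n} :=
    Nat.sInf_mem hTne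
  have hDmem : gamma G ∈ {n | ∃ S : Finset V, Dominating G S ∧ S.card = n} :=
    Nat.sInf_mem hDne
  have hTR_ge : 3 ≤ gammaTR G := by
    obtain ⟨f, hf, hsum⟩ := hTRmem
    have := trdf_ge3 G hn hf
    omega
  have hT_ge : 2 ≤ gammaT G := by
    obtain ⟨S, hS, hcard⟩ := hTmem
    by_contra hlt
    push_neg at hlt
    have hc : S.card = 0 ∨ S.card = 1 := by omega
    rcases hc with hc | hc
    · obtain ⟨u, hu, _⟩ := hS (Classical.arbitrary V)
      rw [Finset.card_eq_zero] at hc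
      simp [hc] at hu
    · obtain ⟨z, hz⟩ := Finset.card_eq_one.mp hc
      obtain ⟨y, hy, hadj⟩ := hS z
      rw [hz, Finset.mem_singleton] at hy
      exact G.irrefl (hy ▸ hadj)
  have hD_ge : 1 ≤ gamma G := by
    obtain ⟨S, hS, hcard⟩ := hDmem
    by_contra hlt
    push_neg at hlt
    have hc : S = ∅ := Finset.card_eq_zero.mp (by omega)
    obtain ⟨u, hu, _⟩ := hS (Classical.arbitrary V) (by simp [hc])
    simp [hc] at hu
  have hdom1 : ∀ u w : V, u ≠ w → G.Adj u w → (∀ x, x ≠ u → x ≠ w → G.Adj u x) →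
      gammaTR G ≤ 3 := by
    intro u w huw hadj hdom
    refine Nat.sInf_le ⟨fun x => (if x = u then 2 else 0) + (if x = w then 1 else 0),
      ⟨?_, ?_, ?_⟩, ?_⟩
    · intro x
      show (if x = u then 2 else 0) + (if x = w then 1 else 0) ≤ 2
      split_ifs with h1 h2
      · subst h1; exact absurd h2 huw
      all_goals omega
    · intro x hx
      have hxu : x ≠ u := by intro h; subst h; simp [huw, Ne.symm huw] at hx
      have hxw : x ≠ w := by intro h; subst h; simp [huw, Ne.symm huw] at hx
      exact ⟨u, hdom x hxu hxw, by simp [huw]⟩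
    · intro x hx
      have : x = u ∨ x = w := by
        by_contra hcon
        push_neg at hcon
        simp [hcon.1, hcon.2] at hx
      rcases this with h | h
      · subst h; exact ⟨w, hadj.symm, by simp [huw, Ne.symm huw]⟩
      · subst h; exact ⟨u, hadj, by simp [huw]⟩
    · rw [Finset.sum_add_distrib]
      simp [Finset.sum_ite_eq']
  have hfwd : gammaTR G ≤ 4 → gammaT G = 2 := by
    intro h4
    obtain ⟨f, hf, hsum⟩ := hTRmem
    obtain ⟨u, v, huv, hall⟩ := pair_lemma G hconn hn hf (by omega)
    have h2mem : gammaT G ≤ 2 := by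
      refine Nat.sInf_le ⟨{u, v}, fun x => ?_, Finset.card_pair huv⟩
      rcases hall x with h | h
      · exact ⟨u, Finset.mem_insert_self u _, h⟩
      · exact ⟨v, Finset.mem_insert_of_mem (Finset.mem_singleton_self v), h⟩
    omega
  have hiff : (gammaTR G = 3 ∨ gammaTR G = 4) ↔ gammaT G = 2 := by
    constructor
    · intro h
      exact hfwd (by omega)
    · intro hT
      obtain ⟨S, hS, hcard⟩ := hTmem
      rw [hT] at hcard
      obtain ⟨u, v, huv, rfl⟩ := Finset.card_eq_two.mp hcard
      have hadjvu : G.Adj v u := by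
        obtain ⟨y, hy, hadj⟩ := hS u
        rcases Finset.mem_insert.mp hy with h | h
        · subst h; exact absurd hadj (G.irrefl)
        · have h' := Finset.mem_singleton.mp h; subst h'; exact hadj
      have hTR_le : gammaTR G ≤ 4 := by
        refine Nat.sInf_le ⟨fun x => (if x = u then 2 else 0) + (if x = v then 2 else 0),
          ⟨?_, ?_, ?_⟩, ?_⟩
        · intro x
          show (if x = u then 2 else 0) + (if x = v then 2 else 0) ≤ 2
          split_ifs with h1 h2
          · subst h1; exact absurd h2 huv
          all_goals omega
        · intro x hx
          obtain ⟨y, hy, hadj⟩ := hS x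
          rcases Finset.mem_insert.mp hy with h | h
          · subst h; exact ⟨y, hadj, by simp [huv]⟩
          · have h' := Finset.mem_singleton.mp h
            subst h'; exact ⟨y, hadj, by simp [huv, Ne.symm huv]⟩
        · intro x hx
          have : x = u ∨ x = v := by
            by_contra hcon
            push_neg at hcon
            simp [hcon.1, hcon.2] at hx
          rcases this with h | h
          · subst h; exact ⟨v, hadjvu, by simp [huv, Ne.symm huv]⟩
          · subst h; exact ⟨u, hadjvu.symm, by simp [huv]⟩
        · rw [Finset.sum_add_distrib]
          simp [Finset.sum_ite_eq']
      omega
  refine ⟨hiff, ?_, ?_⟩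
  · intro h3
    obtain ⟨f, hf, hsum⟩ := hTRmem
    rw [h3] at hsum
    obtain ⟨hle2, h0, hpos⟩ := hf
    have hD_le : gamma G ≤ 1 := by
      by_cases h2 : ∃ u, f u = 2
      · obtain ⟨u, hu⟩ := h2
        obtain ⟨w, hwu, hw⟩ := hpos u (by omega)
        have huw : u ≠ w := fun h => G.irrefl (h ▸ hwu)
        have hw1 : f w = 1 := by
          have := sum2_le f huw
          have := hle2 w
          omega
        refine Nat.sInf_le ⟨{u}, fun x hx => ?_, Finset.card_singleton u⟩
        rw [Finset.mem_singleton] at hx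
        by_cases hxw : x = w
        · exact ⟨u, Finset.mem_singleton_self u, hxw ▸ hwu.symm⟩
        · have hx0 : f x = 0 := by
            by_contra hx0
            have := sum3_le f huw (fun h => hx (h.symm)) (fun h => hxw (h.symm))
            have := Nat.pos_of_ne_zero hx0
            omega
          obtain ⟨y, hyx, hy2⟩ := h0 x hx0
          have hyu : y = u := by
            by_contra hyu
            have hyw : y ≠ w := fun h => by rw [h] at hy2; omega
            have := sum3_le f huw (fun h => hyu h.symm) (fun h => hyw h.symm)
            omega
          exact ⟨u, Finset.mem_singleton_self u, hyu ▸ hyx⟩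
      · push_neg at h2
        have h1 := all_one_of_no_two G ⟨hle2, h0, hpos⟩ h2
        have hcard := sum_card_of_all_one (V := V) h1
        obtain ⟨u, hall⟩ := universal_of_card3 G hconn (by omega)
        refine Nat.sInf_le ⟨{u}, fun x hx => ?_, Finset.card_singleton u⟩
        rw [Finset.mem_singleton] at hx
        rcases hall x with h | h
        · exact absurd h.symm hx
        · exact ⟨u, Finset.mem_singleton_self u, h⟩
    omega
  · intro h4
    have hT2 : gammaT G = 2 := hfwd (by omega)
    have hD_le : gamma G ≤ 2 := by
      obtain ⟨S, hS, hcard⟩ := hTmem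
      rw [hT2] at hcard
      refine Nat.sInf_le ⟨S, fun v _ => hS v, hcard⟩
    have hD_ge2 : 2 ≤ gamma G := by
      by_contra hlt
      push_neg at hlt
      obtain ⟨S, hS, hcard⟩ := hDmem
      have hc : S.card = 0 ∨ S.card = 1 := by omega
      rcases hc with hc | hc
      · obtain ⟨y, hy, _⟩ := hS (Classical.arbitrary V)
          (by simp [Finset.card_eq_zero.mp hc])
        simp [Finset.card_eq_zero.mp hc] at hy
      · obtain ⟨u, rfl⟩ := Finset.card_eq_one.mp hc
        have hdom : ∀ x, x ≠ u → G.Adj u x := by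
          intro x hx
          obtain ⟨y, hy, hadj⟩ := hS x (by simp [hx])
          rw [Finset.mem_singleton] at hy
          exact hy ▸ hadj
        obtain ⟨w, hw⟩ := Fintype.exists_ne_of_one_lt_card (by omega) u
        have := hdom1 u w (Ne.symm hw) (hdom w hw) (fun x hxu _ => hdom x hxu)
        omega
    omega
end

section
/- Given a graph G with no isolated vertices and a non-edge uv of G, γ_tR(G) − 2 ≤ γ_tR(G + uv) ≤ γ_tR(G), where G + uv denotes the graph obtained by adding the edge uv. -/
open SimpleGraph Finset

variable {V : Type*}

lemma const2_trdf (G : SimpleGraph V) (h : NoIsolated G) :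
    IsTRDF G (fun _ => 2) := by
  refine ⟨fun _ => le_refl 2, fun w hw => by simp at hw, fun w _ => ?_⟩
  obtain ⟨x, hx⟩ := h w
  exact ⟨x, hx, by norm_num⟩

open Classical in
noncomputable def patch (f : V → ℕ) (S : Set V) : V → ℕ :=
  fun w => if w ∈ S then max (f w) 1 else f w

open Classical in
lemma patch_mem (f : V → ℕ) (S : Set V) {w : V} (hw : w ∈ S) :
    patch f S w = max (f w) 1 := if_pos hw

open Classical in
lemma patch_not_mem (f : V → ℕ) (S : Set V) {w : V} (hw : w ∉ S) :
    patch f S w = f w := if_neg hw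

lemma addEdge_adj (G : SimpleGraph V) {u v : V} (huv : u ≠ v) (a b : V) :
    (addEdge G u v).Adj a b ↔ G.Adj a b ∨ (a = u ∧ b = v) ∨ (a = v ∧ b = u) := by
  simp only [addEdge, SimpleGraph.sup_adj, SimpleGraph.fromEdgeSet_adj,
    Set.mem_singleton_iff, Sym2.eq_iff]
  constructor
  · rintro (hG | ⟨⟨rfl, rfl⟩ | ⟨rfl, rfl⟩, hab⟩) <;> tauto
  · rintro (hG | ⟨rfl, rfl⟩ | ⟨rfl, rfl⟩)
    · exact Or.inl hG
    · exact Or.inr ⟨Or.inl ⟨rfl, rfl⟩, huv⟩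
    · exact Or.inr ⟨Or.inr ⟨rfl, rfl⟩, huv.symm⟩

lemma lower_aux (G : SimpleGraph V) [Fintype V] (h : NoIsolated G) (u v : V)
    (huv : u ≠ v) (hne : ¬G.Adj u v) (f : V → ℕ) (hf : IsTRDF (addEdge G u v) f) :
    ∃ g : V → ℕ, IsTRDF G g ∧ ∑ w, g w ≤ (∑ w, f w) + 2 := by
  classical
  obtain ⟨u', hu'⟩ := h u
  obtain ⟨v', hv'⟩ := h v
  have hu'u : u' ≠ u := G.ne_of_adj hu'
  have hv'v : v' ≠ v := G.ne_of_adj hv'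
  have hu'v : u' ≠ v := fun hh => hne (hh ▸ hu').symm
  have hv'u : v' ≠ u := fun hh => hne (hh ▸ hv')
  set condU : Prop := (f u = 0 → ∃ y, G.Adj y u ∧ f y = 2) ∧
      (0 < f u → ∃ y, G.Adj y u ∧ 0 < f y) with hcondU
  set condV : Prop := (f v = 0 → ∃ y, G.Adj y v ∧ f y = 2) ∧
      (0 < f v → ∃ y, G.Adj y v ∧ 0 < f y) with hcondV
  set S : Set V := {w | (¬condU ∧ (w = u ∨ w = u')) ∨ (¬condV ∧ (w = v ∨ w = v'))}
    with hS
  set g : V → ℕ := patch f S with hg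
  have hmemS : ∀ w : V, w ∈ S ↔
      ((¬condU ∧ (w = u ∨ w = u')) ∨ (¬condV ∧ (w = v ∨ w = v'))) := fun w => Iff.rfl
  have hge : ∀ w, f w ≤ g w := by
    intro w
    by_cases hw : w ∈ S
    · rw [hg, patch_mem f S hw]; exact le_max_left _ _
    · rw [hg, patch_not_mem f S hw]
  have hle2 : ∀ w, g w ≤ 2 := by
    intro w
    by_cases hw : w ∈ S
    · rw [hg, patch_mem f S hw]; exact max_le (hf.1 w) one_le_two
    · rw [hg, patch_not_mem f S hw]; exact hf.1 w
  have h2 : ∀ w, f w = 2 → g w = 2 := by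
    intro w hw; have := hge w; have := hle2 w; omega
  have hgS : ∀ w, w ∈ S → 1 ≤ g w := by
    intro w hw; rw [hg, patch_mem f S hw]; exact le_max_right _ _
  -- if both broken then both endpoints positive
  have hposU : ¬condU → ¬condV → 0 < f u := by
    intro hnU hnV
    rcases Nat.eq_zero_or_pos (f u) with h0 | h; swap; · exact h
    exfalso
    have hC2 : (0 < f u → ∃ y, G.Adj y u ∧ 0 < f y) := fun hp => absurd h0 (by omega)
    have hnC1 : ¬(f u = 0 → ∃ y, G.Adj y u ∧ f y = 2) := fun hc => hnU ⟨hc, hC2⟩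
    obtain ⟨y, hy, hy2⟩ := hf.2.1 u h0
    rcases (addEdge_adj G huv y u).1 hy with hG | ⟨_, huv2⟩ | ⟨hyv, _⟩
    · exact hnC1 (fun _ => ⟨y, hG, hy2⟩)
    · exact huv huv2
    · -- y = v, f v = 2, v broken means no positive G-neighbor of v
      rw [hyv] at hy2
      have hvpos : 0 < f v := by omega
      have hC1v : (f v = 0 → ∃ y, G.Adj y v ∧ f y = 2) := fun hp => absurd hp (by omega)
      have hnC2v : ¬(0 < f v → ∃ y, G.Adj y v ∧ 0 < f y) := fun hc => hnV ⟨hC1v, hc⟩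
      obtain ⟨z, hz, hzpos⟩ := hf.2.2 v hvpos
      rcases (addEdge_adj G huv z v).1 hz with hG | ⟨hzu, _⟩ | ⟨_, hvu⟩
      · exact hnC2v (fun _ => ⟨z, hG, hzpos⟩)
      · rw [hzu] at hzpos; omega
      · exact huv hvu.symm
  have hposV : ¬condU → ¬condV → 0 < f v := by
    intro hnU hnV
    rcases Nat.eq_zero_or_pos (f v) with h0 | h; swap; · exact h
    exfalso
    have hC2 : (0 < f v → ∃ y, G.Adj y v ∧ 0 < f y) := fun hp => absurd h0 (by omega)
    have hnC1 : ¬(f v = 0 → ∃ y, G.Adj y v ∧ f y = 2) := fun hc => hnV ⟨hc, hC2⟩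
    obtain ⟨y, hy, hy2⟩ := hf.2.1 v h0
    rcases (addEdge_adj G huv y v).1 hy with hG | ⟨hyu, _⟩ | ⟨_, hvu⟩
    · exact hnC1 (fun _ => ⟨y, hG, hy2⟩)
    · -- y = u, f u = 2, u broken means no positive G-neighbor of u
      rw [hyu] at hy2
      have hupos : 0 < f u := by omega
      have hC1u : (f u = 0 → ∃ y, G.Adj y u ∧ f y = 2) := fun hp => absurd hp (by omega)
      have hnC2u : ¬(0 < f u → ∃ y, G.Adj y u ∧ 0 < f y) := fun hc => hnU ⟨hC1u, hc⟩
      obtain ⟨z, hz, hzpos⟩ := hf.2.2 u hupos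
      rcases (addEdge_adj G huv z u).1 hz with hG | ⟨_, huv2⟩ | ⟨hzv, _⟩
      · exact hnC2u (fun _ => ⟨z, hG, hzpos⟩)
      · exact huv huv2
      · rw [hzv] at hzpos; omega
    · exact huv hvu.symm
  refine ⟨g, ⟨hle2, ?_, ?_⟩, ?_⟩
  · -- zero vertices have a 2-neighbor
    intro w hw0
    have hfw0 : f w = 0 := by have := hge w; omega
    have hnS : w ∉ S := fun hwS => by have := hgS w hwS; omega
    obtain ⟨y, hy, hy2⟩ := hf.2.1 w hfw0
    rcases (addEdge_adj G huv y w).1 hy with hG | ⟨hyu, hwv⟩ | ⟨hyv, hwu⟩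
    · exact ⟨y, hG, h2 y hy2⟩
    · -- w = v, y = u
      rw [hwv] at hfw0 hnS ⊢
      have hcV : condV := by
        by_contra hnV
        exact hnS ((hmemS v).2 (Or.inr ⟨hnV, Or.inl rfl⟩))
      obtain ⟨z, hz, hz2⟩ := hcV.1 hfw0
      exact ⟨z, hz, h2 z hz2⟩
    · -- w = u, y = v
      rw [hwu] at hfw0 hnS ⊢
      have hcU : condU := by
        by_contra hnU
        exact hnS ((hmemS u).2 (Or.inl ⟨hnU, Or.inl rfl⟩))
      obtain ⟨z, hz, hz2⟩ := hcU.1 hfw0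
      exact ⟨z, hz, h2 z hz2⟩
  · -- positive vertices have a positive neighbor
    intro w hwpos
    by_cases hwS : w ∈ S
    · rcases (hmemS w).1 hwS with ⟨hnU, rfl | rfl⟩ | ⟨hnV, rfl | rfl⟩
      · exact ⟨u', hu', hgS u' ((hmemS u').2 (Or.inl ⟨hnU, Or.inr rfl⟩))⟩
      · exact ⟨u, hu'.symm, hgS u ((hmemS u).2 (Or.inl ⟨hnU, Or.inl rfl⟩))⟩
      · exact ⟨v', hv', hgS v' ((hmemS v').2 (Or.inr ⟨hnV, Or.inr rfl⟩))⟩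
      · exact ⟨v, hv'.symm, hgS v ((hmemS v).2 (Or.inr ⟨hnV, Or.inl rfl⟩))⟩
    · have hfw : 0 < f w := by rw [hg, patch_not_mem f S hwS] at hwpos; exact hwpos
      obtain ⟨y, hy, hypos⟩ := hf.2.2 w hfw
      rcases (addEdge_adj G huv y w).1 hy with hG | ⟨hyu, hwv⟩ | ⟨hyv, hwu⟩
      · exact ⟨y, hG, lt_of_lt_of_le hypos (hge y)⟩
      · -- w = v, y = u
        rw [hwv] at hfw hwS ⊢
        have hcV : condV := by
          by_contra hnV
          exact hwS ((hmemS v).2 (Or.inr ⟨hnV, Or.inl rfl⟩))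
        obtain ⟨z, hz, hzpos⟩ := hcV.2 hfw
        exact ⟨z, hz, lt_of_lt_of_le hzpos (hge z)⟩
      · -- w = u, y = v
        rw [hwu] at hfw hwS ⊢
        have hcU : condU := by
          by_contra hnU
          exact hwS ((hmemS u).2 (Or.inl ⟨hnU, Or.inl rfl⟩))
        obtain ⟨z, hz, hzpos⟩ := hcU.2 hfw
        exact ⟨z, hz, lt_of_lt_of_le hzpos (hge z)⟩
  · -- sum bound
    by_cases hU : condU <;> by_cases hV : condV
    · -- nothing broken: g = f
      have : ∀ w, g w = f w := by
        intro w
        refine patch_not_mem f S ?_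
        rw [hmemS]; push_neg; exact ⟨fun h' => absurd hU h', fun h' => absurd hV h'⟩
      calc ∑ w, g w = ∑ w, f w := Finset.sum_congr rfl (fun w _ => this w)
        _ ≤ (∑ w, f w) + 2 := le_self_add
    · -- only v broken
      have hpt : ∀ w, g w ≤ f w + ((if w = v then 1 else 0) + (if w = v' then 1 else 0)) := by
        intro w
        by_cases hwS : w ∈ S
        · rw [hg, patch_mem f S hwS]
          rcases (hmemS w).1 hwS with ⟨hnU, _⟩ | ⟨_, rfl | rfl⟩
          · exact absurd hU hnU
          · apply max_le le_self_add; split_ifs <;> first | omega | exact absurd rfl (by assumption)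
          · apply max_le le_self_add; split_ifs <;> first | omega | exact absurd rfl (by assumption)
        · rw [hg, patch_not_mem f S hwS]; exact le_self_add
      calc ∑ w, g w ≤ ∑ w, (f w + ((if w = v then 1 else 0) + (if w = v' then 1 else 0))) :=
            Finset.sum_le_sum (fun w _ => hpt w)
        _ = (∑ w, f w) + 2 := by
            rw [Finset.sum_add_distrib, Finset.sum_add_distrib]
            simp [Finset.sum_ite_eq']
    · -- only u broken
      have hpt : ∀ w, g w ≤ f w + ((if w = u then 1 else 0) + (if w = u' then 1 else 0)) := by
        intro w
        by_cases hwS : w ∈ S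
        · rw [hg, patch_mem f S hwS]
          rcases (hmemS w).1 hwS with ⟨_, rfl | rfl⟩ | ⟨hnV, _⟩
          · apply max_le le_self_add; split_ifs <;> first | omega | exact absurd rfl (by assumption)
          · apply max_le le_self_add; split_ifs <;> first | omega | exact absurd rfl (by assumption)
          · exact absurd hV hnV
        · rw [hg, patch_not_mem f S hwS]; exact le_self_add
      calc ∑ w, g w ≤ ∑ w, (f w + ((if w = u then 1 else 0) + (if w = u' then 1 else 0))) :=
            Finset.sum_le_sum (fun w _ => hpt w)
        _ = (∑ w, f w) + 2 := by
            rw [Finset.sum_add_distrib, Finset.sum_add_distrib]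
            simp [Finset.sum_ite_eq']
    · -- both broken: f u, f v positive
      have hfu := hposU hU hV
      have hfv := hposV hU hV
      have hpt : ∀ w, g w ≤ f w + ((if w = u' then 1 else 0) + (if w = v' then 1 else 0)) := by
        intro w
        by_cases hwS : w ∈ S
        · rw [hg, patch_mem f S hwS]
          apply max_le le_self_add
          rcases (hmemS w).1 hwS with ⟨_, rfl | rfl⟩ | ⟨_, rfl | rfl⟩
          · omega
          · split_ifs <;> first | omega | exact absurd rfl (by assumption)
          · omega
          · split_ifs <;> first | omega | exact absurd rfl (by assumption)
        · rw [hg, patch_not_mem f S hwS]; exact le_self_add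
      calc ∑ w, g w ≤ ∑ w, (f w + ((if w = u' then 1 else 0) + (if w = v' then 1 else 0))) :=
            Finset.sum_le_sum (fun w _ => hpt w)
        _ = (∑ w, f w) + 2 := by
            rw [Finset.sum_add_distrib, Finset.sum_add_distrib]
            simp [Finset.sum_ite_eq']

theorem stmt6 (G : SimpleGraph V) [Fintype V] (h : NoIsolated G) (u v : V)
    (huv : u ≠ v) (hne : ¬G.Adj u v) :
    gammaTR G - 2 ≤ gammaTR (addEdge G u v) ∧ gammaTR (addEdge G u v) ≤ gammaTR G := by
  classical
  have hNI' : NoIsolated (addEdge G u v) := by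
    intro w
    obtain ⟨x, hx⟩ := h w
    exact ⟨x, (addEdge_adj G huv x w).2 (Or.inl hx)⟩
  have hmemG : gammaTR G ∈ {n | ∃ f : V → ℕ, IsTRDF G f ∧ ∑ w, f w = n} :=
    Nat.sInf_mem ⟨∑ _w : V, 2, fun _ => 2, const2_trdf G h, rfl⟩
  have hmemE : gammaTR (addEdge G u v) ∈
      {n | ∃ f : V → ℕ, IsTRDF (addEdge G u v) f ∧ ∑ w, f w = n} :=
    Nat.sInf_mem ⟨∑ _w : V, 2, fun _ => 2, const2_trdf _ hNI', rfl⟩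
  constructor
  · obtain ⟨f, hf, hsum⟩ := hmemE
    obtain ⟨g, hg, hgs⟩ := lower_aux G h u v huv hne f hf
    have hle : gammaTR G ≤ gammaTR (addEdge G u v) + 2 := by
      calc gammaTR G ≤ ∑ w, g w := Nat.sInf_le ⟨g, hg, rfl⟩
        _ ≤ (∑ w, f w) + 2 := hgs
        _ = gammaTR (addEdge G u v) + 2 := by rw [hsum]
    omega
  · obtain ⟨f, hf, hsum⟩ := hmemG
    apply Nat.sInf_le
    refine ⟨f, ⟨hf.1, ?_, ?_⟩, hsum⟩
    · intro w hw
      obtain ⟨y, hy, hy2⟩ := hf.2.1 w hw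
      exact ⟨y, (addEdge_adj G huv y w).2 (Or.inl hy), hy2⟩
    · intro w hw
      obtain ⟨y, hy, hyp⟩ := hf.2.2 w hw
      exact ⟨y, (addEdge_adj G huv y w).2 (Or.inl hy), hyp⟩
end

section
/- Let G be a graph with no isolated vertices, u a vertex of degree 1 with unique neighbour v. Then for any total Roman dominating function f on G of minimum weight, either f(u) = f(v) = 1, or f(v) = 2 and f(u) ∈ {0,1}. -/
open SimpleGraph Finset

variable {V : Type*}

theorem stmt7 (G : SimpleGraph V) [Fintype V] (h : NoIsolated G) (u v : V)
    (hdeg : degreeN G u = 1) (hadj : G.Adj u v) (f : V → ℕ)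
    (hf : IsTRDF G f) (hmin : ∑ w, f w = gammaTR G) :
    (f u = 1 ∧ f v = 1) ∨ (f v = 2 ∧ f u ≤ 1) := by
  obtain ⟨a, ha⟩ := Set.ncard_eq_one.mp hdeg
  have hv : ∀ w, G.Adj u w → w = v := by
    intro w hw
    have h1 : w ∈ {x | G.Adj u x} := hw
    have h2 : v ∈ {x | G.Adj u x} := hadj
    rw [ha] at h1 h2
    simp only [Set.mem_singleton_iff] at h1 h2
    rw [h1, ← h2]
  obtain ⟨hle, hdom, htot⟩ := hf
  rcases Nat.lt_or_ge (f u) 2 with h2 | h2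
  · -- f u = 0 or f u = 1
    rcases Nat.eq_zero_or_pos (f u) with h0 | h0
    · obtain ⟨x, hx, hx2⟩ := hdom u h0
      have hxv := hv x hx.symm
      right; exact ⟨by rw [← hxv]; exact hx2, by omega⟩
    · obtain ⟨x, hx, hxp⟩ := htot u h0
      have hxv := hv x hx.symm
      rw [hxv] at hxp
      have : f v ≤ 2 := hle v
      rcases Nat.lt_or_ge (f v) 2 with hv2 | hv2
      · left; constructor <;> omega
      · right; constructor <;> omega
  · -- f u = 2 : contradict minimality
    exfalso
    classical
    have hfu : f u = 2 := le_antisymm (hle u) h2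
    have hfv : 0 < f v := by
      obtain ⟨x, hx, hxp⟩ := htot u (by omega)
      have := hv x hx.symm
      rwa [this] at hxp
    set g := Function.update f u 1 with hg
    have hgu : g u = 1 := by simp [hg]
    have hgw : ∀ w, w ≠ u → g w = f w := by
      intro w hw; simp [hg, Function.update_of_ne hw]
    have hgTRDF : IsTRDF G g := by
      refine ⟨?_, ?_, ?_⟩
      · intro w
        by_cases hw : w = u
        · rw [hw, hgu]; omega
        · rw [hgw w hw]; exact hle w
      · intro w hw0
        have hwu : w ≠ u := by intro e; rw [e, hgu] at hw0; omega
        have hfw0 : f w = 0 := by rwa [hgw w hwu] at hw0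
        obtain ⟨x, hx, hx2⟩ := hdom w hfw0
        have hxu : x ≠ u := by
          intro e; rw [e] at hx
          have := hv w hx
          rw [this] at hfw0; omega
        exact ⟨x, hx, by rwa [hgw x hxu]⟩
      · intro w hw
        have hfw : 0 < f w := by
          by_cases hwu : w = u
          · rw [hwu]; omega
          · rwa [hgw w hwu] at hw
        obtain ⟨x, hx, hxp⟩ := htot w hfw
        refine ⟨x, hx, ?_⟩
        by_cases hxu : x = u
        · rw [hxu, hgu]; omega
        · rwa [hgw x hxu]
    have hsum : ∑ w, g w + 1 = ∑ w, f w := by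
      have h1 : ∑ w, g w = 1 + ∑ w ∈ Finset.univ \ {u}, f w :=
        Finset.sum_update_of_mem (Finset.mem_univ u) f 1
      have h2 : ∑ w, f w = f u + ∑ w ∈ Finset.univ \ {u}, f w := by
        rw [Finset.sdiff_singleton_eq_erase, Finset.add_sum_erase _ _ (Finset.mem_univ u)]
      omega
    have hle' : gammaTR G ≤ ∑ w, g w := Nat.sInf_le ⟨g, hgTRDF, rfl⟩
    omega
end

section
/- There is no tree T that is total-Roman-domination edge-supercritical; that is, no tree T satisfies γ_tR(T + e) = γ_tR(T) − 2 for all non-edges e (with at least one non-edge existing). -/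
open SimpleGraph Finset

variable {V : Type*}

namespace TRAux


lemma gammaTR_le {G : SimpleGraph V} [Fintype V] {f : V → ℕ} (hf : IsTRDF G f) :
    gammaTR G ≤ ∑ v, f v :=
  Nat.sInf_le ⟨f, hf, rfl⟩

lemma gammaTR_exists {G : SimpleGraph V} [Fintype V] (h : ∃ f, IsTRDF G f) :
    ∃ f, IsTRDF G f ∧ ∑ v, f v = gammaTR G := by
  obtain ⟨f, hf⟩ := h
  have hne : {n | ∃ f : V → ℕ, IsTRDF G f ∧ ∑ v, f v = n}.Nonempty := ⟨∑ v, f v, f, hf, rfl⟩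
  exact Nat.sInf_mem hne

lemma sum_update_add [Fintype V] [DecidableEq V] (f : V → ℕ) (x : V) (c : ℕ) :
    (∑ v, Function.update f x c v) + f x = (∑ v, f v) + c := by
  rw [Finset.sum_update_of_mem (Finset.mem_univ x), Finset.sdiff_singleton_eq_erase,
      ← Finset.add_sum_erase _ f (Finset.mem_univ x)]
  omega

lemma addEdge_adj {G : SimpleGraph V} {a b : V} (hab : a ≠ b) (x y : V) :
    (addEdge G a b).Adj x y ↔ G.Adj x y ∨ (x = a ∧ y = b) ∨ (x = b ∧ y = a) := by
  simp only [addEdge, SimpleGraph.sup_adj, SimpleGraph.fromEdgeSet_adj,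
    Set.mem_singleton_iff, Sym2.eq_iff]
  constructor
  · rintro (h | ⟨⟨rfl, rfl⟩ | ⟨rfl, rfl⟩, hne⟩)
    · exact Or.inl h
    · exact Or.inr (Or.inl ⟨rfl, rfl⟩)
    · exact Or.inr (Or.inr ⟨rfl, rfl⟩)
  · rintro (h | ⟨rfl, rfl⟩ | ⟨rfl, rfl⟩)
    · exact Or.inl h
    · exact Or.inr ⟨Or.inl ⟨rfl, rfl⟩, hab⟩
    · exact Or.inr ⟨Or.inr ⟨rfl, rfl⟩, hab.symm⟩

lemma trdf_of_ge {G : SimpleGraph V} {a b : V} (hab : a ≠ b) {h g : V → ℕ}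
    (hh : IsTRDF (addEdge G a b) h)
    (mono : ∀ v, h v ≤ g v) (hle : ∀ v, g v ≤ 2)
    (ha0 : g a = 0 → ∃ w, G.Adj w a ∧ g w = 2)
    (hb0 : g b = 0 → ∃ w, G.Adj w b ∧ g w = 2)
    (hap : 0 < g a → ∃ w, G.Adj w a ∧ 0 < g w)
    (hbp : 0 < g b → ∃ w, G.Adj w b ∧ 0 < g w)
    (hnew : ∀ v, h v = 0 → 0 < g v → v ≠ a → v ≠ b → ∃ w, G.Adj w v ∧ 0 < g w) :
    IsTRDF G g := by
  obtain ⟨h2, hz, hp⟩ := hh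
  refine ⟨hle, ?_, ?_⟩
  · intro v hv
    by_cases hva : v = a
    · exact hva ▸ ha0 (hva ▸ hv)
    by_cases hvb : v = b
    · exact hvb ▸ hb0 (hvb ▸ hv)
    have hhv : h v = 0 := Nat.le_zero.mp (hv ▸ mono v)
    obtain ⟨u, hu, hu2⟩ := hz v hhv
    rcases (addEdge_adj hab u v).mp hu with hT | ⟨_, rfl⟩ | ⟨_, rfl⟩
    · exact ⟨u, hT, le_antisymm (hle u) (hu2 ▸ mono u)⟩
    · exact absurd rfl hvb
    · exact absurd rfl hva
  · intro v hv
    by_cases hva : v = a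
    · exact hva ▸ hap (hva ▸ hv)
    by_cases hvb : v = b
    · exact hvb ▸ hbp (hvb ▸ hv)
    rcases Nat.eq_zero_or_pos (h v) with hhv | hhv
    · exact hnew v hhv hv hva hvb
    obtain ⟨u, hu, hup⟩ := hp v hhv
    rcases (addEdge_adj hab u v).mp hu with hT | ⟨_, rfl⟩ | ⟨_, rfl⟩
    · exact ⟨u, hT, lt_of_lt_of_le hup (mono u)⟩
    · exact absurd rfl hvb
    · exact absurd rfl hva


/-- Kill case B : two leaves `l1 l2` with common support `s`. -/
lemma killB [Fintype V] {T : SimpleGraph V} {l1 l2 s : V}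
    (hll : l1 ≠ l2) (hnadj : ¬T.Adj l1 l2)
    (hs1 : T.Adj s l1) (hs2 : T.Adj s l2)
    (hleaf1 : ∀ w, T.Adj l1 w → w = s) (hleaf2 : ∀ w, T.Adj l2 w → w = s)
    (hex : ∃ f, IsTRDF (addEdge T l1 l2) f)
    (hsup : gammaTR (addEdge T l1 l2) + 2 = gammaTR T) : False := by
  classical
  obtain ⟨h, hh, hsum⟩ := gammaTR_exists hex
  set m := gammaTR (addEdge T l1 l2) with hm
  obtain ⟨h2, hz, hp⟩ := hh
  have hsl1 : s ≠ l1 := hs1.ne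
  have hsl2 : s ≠ l2 := hs2.ne
  have nbr1 : ∀ u, (addEdge T l1 l2).Adj u l1 → u = s ∨ u = l2 := by
    intro u hu
    rcases (addEdge_adj hll u l1).mp hu with hT | ⟨he1, he2⟩ | ⟨he1, he2⟩
    · exact Or.inl (hleaf1 u hT.symm)
    · exact absurd he2 hll
    · exact Or.inr he1
  have nbr2 : ∀ u, (addEdge T l1 l2).Adj u l2 → u = s ∨ u = l1 := by
    intro u hu
    rcases (addEdge_adj hll u l2).mp hu with hT | ⟨he1, he2⟩ | ⟨he1, he2⟩
    · exact Or.inl (hleaf2 u hT.symm)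
    · exact Or.inr he1
    · exact absurd he2.symm hll
  have hs2le := h2 s
  rcases (show h s = 0 ∨ h s = 1 ∨ h s = 2 by omega) with hs | hs | hs
  · -- h s = 0
    by_cases hl10 : h l1 = 0
    · obtain ⟨u, hu, hu2⟩ := hz l1 hl10
      rcases nbr1 u hu with he | he
      · rw [he] at hu2; omega
      · rw [he] at hu2
        obtain ⟨w, hw, hwp⟩ := hp l2 (by omega)
        rcases nbr2 w hw with he' | he' <;> rw [he'] at hwp <;> omega
    by_cases hl20 : h l2 = 0
    · obtain ⟨u, hu, hu2⟩ := hz l2 hl20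
      rcases nbr2 u hu with he | he
      · rw [he] at hu2; omega
      · rw [he] at hu2
        obtain ⟨w, hw, hwp⟩ := hp l1 (by omega)
        rcases nbr1 w hw with he' | he' <;> rw [he'] at hwp <;> omega
    -- both positive : g = h[s ↦ 2, l1 ↦ 1, l2 ↦ 0]
    set g : V → ℕ :=
      Function.update (Function.update (Function.update h s 2) l1 1) l2 0 with hg
    have gval : ∀ v, v ≠ s → v ≠ l1 → v ≠ l2 → g v = h v := by
      intro v hv1 hv2 hv3
      simp only [hg, Function.update_of_ne hv3, Function.update_of_ne hv2,
        Function.update_of_ne hv1]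
    have gs : g s = 2 := by
      simp only [hg, Function.update_of_ne hsl2, Function.update_of_ne hsl1,
        Function.update_self]
    have gl1 : g l1 = 1 := by
      simp only [hg, Function.update_of_ne hll, Function.update_self]
    have gl2 : g l2 = 0 := by simp only [hg, Function.update_self]
    have hsum2 : ∑ v, g v ≤ m + 1 := by
      have e1 := sum_update_add h s 2
      have e2 := sum_update_add (Function.update h s 2) l1 1
      have e3 := sum_update_add (Function.update (Function.update h s 2) l1 1) l2 0
      have v1 : Function.update h s 2 l1 = h l1 := Function.update_of_ne hsl1.symm 2 h
      have v2 : Function.update (Function.update h s 2) l1 1 l2 = h l2 := by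
        rw [Function.update_of_ne hll.symm, Function.update_of_ne hsl2.symm]
      rw [v1] at e2; rw [v2] at e3
      simp only [hg]
      omega
    have hgood : IsTRDF T g := by
      refine ⟨?_, ?_, ?_⟩
      · intro v
        by_cases h1 : v = s; · rw [h1, gs]
        by_cases h2' : v = l1; · rw [h2', gl1]; omega
        by_cases h3 : v = l2; · rw [h3, gl2]; omega
        rw [gval v h1 h2' h3]; exact h2 v
      · intro v hv
        by_cases h3 : v = l2
        · subst h3; exact ⟨s, hs2, gs⟩
        by_cases h1 : v = s; · rw [h1, gs] at hv; omega
        by_cases h2' : v = l1; · rw [h2', gl1] at hv; omega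
        rw [gval v h1 h2' h3] at hv
        obtain ⟨u, hu, hu2⟩ := hz v hv
        rcases (addEdge_adj hll u v).mp hu with hT | ⟨he1, he2⟩ | ⟨he1, he2⟩
        · refine ⟨u, hT, ?_⟩
          have hus : u ≠ s := by intro h'; rw [h'] at hu2; omega
          have hul1 : u ≠ l1 := by
            intro h'; subst h'; exact h1 (hleaf1 v hT)
          have hul2 : u ≠ l2 := by
            intro h'; subst h'; exact h1 (hleaf2 v hT)
          rw [gval u hus hul1 hul2]; exact hu2
        · exact absurd he2 h3
        · exact absurd he2 h2'
      · intro v hv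
        by_cases h1 : v = s
        · subst h1; exact ⟨l1, hs1.symm, by rw [gl1]; omega⟩
        by_cases h2' : v = l1
        · subst h2'; exact ⟨s, hs1, by rw [gs]; omega⟩
        by_cases h3 : v = l2; · rw [h3, gl2] at hv; omega
        rw [gval v h1 h2' h3] at hv
        obtain ⟨u, hu, hup⟩ := hp v hv
        rcases (addEdge_adj hll u v).mp hu with hT | ⟨he1, he2⟩ | ⟨he1, he2⟩
        · refine ⟨u, hT, ?_⟩
          by_cases hus : u = s; · rw [hus, gs]; omega
          by_cases hul1 : u = l1; · rw [hul1, gl1]; omega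
          by_cases hul2 : u = l2
          · subst hul2; exact absurd (hleaf2 v hT) h1
          rw [gval u hus hul1 hul2]; exact hup
        · exact absurd he2 h3
        · exact absurd he2 h2'
    have := gammaTR_le hgood
    omega
  · -- h s = 1
    by_cases hl10 : h l1 = 0
    · obtain ⟨u, hu, hu2⟩ := hz l1 hl10
      rcases nbr1 u hu with he | he
      · rw [he] at hu2; omega
      · rw [he] at hu2
        -- h l2 = 2 ; fix : l1 ↦ 1
        set g := Function.update h l1 1 with hg
        have hsum2 : ∑ v, g v = m + 1 := by
          have := sum_update_add h l1 1; simp only [hg]; omega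
        have hgood : IsTRDF T g :=
          trdf_of_ge hll ⟨h2, hz, hp⟩
            (fun v => by
              by_cases h' : v = l1
              · subst h'; simp only [hg, Function.update_self]; omega
              · simp only [hg, Function.update_of_ne h']; exact le_refl _)
            (fun v => by
              by_cases h' : v = l1
              · subst h'; simp only [hg, Function.update_self]; omega
              · simp only [hg, Function.update_of_ne h']; exact h2 v)
            (by intro h'; rw [hg, Function.update_self] at h'; omega)
            (by intro h'; rw [hg, Function.update_of_ne hll.symm] at h'; omega)
            (fun _ => ⟨s, hs1, by rw [hg, Function.update_of_ne hsl1]; omega⟩)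
            (fun _ => ⟨s, hs2, by rw [hg, Function.update_of_ne hsl1]; omega⟩)
            (fun v hv0 hvp hv1 hv2 => by
              rw [hg, Function.update_of_ne hv1] at hvp; omega)
        have := gammaTR_le hgood
        omega
    by_cases hl20 : h l2 = 0
    · obtain ⟨u, hu, hu2⟩ := hz l2 hl20
      rcases nbr2 u hu with he | he
      · rw [he] at hu2; omega
      · rw [he] at hu2
        set g := Function.update h l2 1 with hg
        have hsum2 : ∑ v, g v = m + 1 := by
          have := sum_update_add h l2 1; simp only [hg]; omega
        have hgood : IsTRDF T g :=
          trdf_of_ge hll ⟨h2, hz, hp⟩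
            (fun v => by
              by_cases h' : v = l2
              · subst h'; simp only [hg, Function.update_self]; omega
              · simp only [hg, Function.update_of_ne h']; exact le_refl _)
            (fun v => by
              by_cases h' : v = l2
              · subst h'; simp only [hg, Function.update_self]; omega
              · simp only [hg, Function.update_of_ne h']; exact h2 v)
            (by intro h'; rw [hg, Function.update_of_ne hll] at h'; omega)
            (by intro h'; rw [hg, Function.update_self] at h'; omega)
            (fun _ => ⟨s, hs1, by rw [hg, Function.update_of_ne hsl2]; omega⟩)
            (fun _ => ⟨s, hs2, by rw [hg, Function.update_of_ne hsl2]; omega⟩)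
            (fun v hv0 hvp hv1 hv2 => by
              rw [hg, Function.update_of_ne hv2] at hvp; omega)
        have := gammaTR_le hgood
        omega
    · -- both positive and h s = 1 : h itself works on T
      have hgood : IsTRDF T h := by
        refine ⟨h2, ?_, ?_⟩
        · intro v hv
          by_cases h1' : v = l1; · rw [h1'] at hv; omega
          by_cases h2' : v = l2; · rw [h2'] at hv; omega
          obtain ⟨u, hu, hu2⟩ := hz v hv
          rcases (addEdge_adj hll u v).mp hu with hT | ⟨he1, he2⟩ | ⟨he1, he2⟩
          · exact ⟨u, hT, hu2⟩
          · exact absurd he2 h2'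
          · exact absurd he2 h1'
        · intro v hv
          by_cases h1' : v = l1; · subst h1'; exact ⟨s, hs1, by omega⟩
          by_cases h2' : v = l2; · subst h2'; exact ⟨s, hs2, by omega⟩
          obtain ⟨u, hu, hup⟩ := hp v hv
          rcases (addEdge_adj hll u v).mp hu with hT | ⟨he1, he2⟩ | ⟨he1, he2⟩
          · exact ⟨u, hT, hup⟩
          · exact absurd he2 h2'
          · exact absurd he2 h1'
      have := gammaTR_le hgood
      omega
  · -- h s = 2 : h itself works on T
    have hgood : IsTRDF T h := by
      refine ⟨h2, ?_, ?_⟩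
      · intro v hv
        by_cases h1' : v = l1; · subst h1'; exact ⟨s, hs1, hs⟩
        by_cases h2' : v = l2; · subst h2'; exact ⟨s, hs2, hs⟩
        obtain ⟨u, hu, hu2⟩ := hz v hv
        rcases (addEdge_adj hll u v).mp hu with hT | ⟨he1, he2⟩ | ⟨he1, he2⟩
        · exact ⟨u, hT, hu2⟩
        · exact absurd he2 h2'
        · exact absurd he2 h1'
      · intro v hv
        by_cases h1' : v = l1; · subst h1'; exact ⟨s, hs1, by omega⟩
        by_cases h2' : v = l2; · subst h2'; exact ⟨s, hs2, by omega⟩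
        obtain ⟨u, hu, hup⟩ := hp v hv
        rcases (addEdge_adj hll u v).mp hu with hT | ⟨he1, he2⟩ | ⟨he1, he2⟩
        · exact ⟨u, hT, hup⟩
        · exact absurd he2 h2'
        · exact absurd he2 h1'
    have := gammaTR_le hgood
    omega


/-- Kill case A : a path v0-v1-v2-v3 where v0 is a leaf and v1 has degree 2. -/
lemma killA [Fintype V] {T : SimpleGraph V} {v0 v1 v2 v3 : V}
    (h01 : T.Adj v0 v1) (h12 : T.Adj v1 v2) (h23 : T.Adj v2 v3)
    (h13ne : v1 ≠ v3) (h13 : ¬T.Adj v1 v3) (h02ne : v0 ≠ v2) (h03ne : v0 ≠ v3)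
    (hleaf0 : ∀ w, T.Adj v0 w → w = v1)
    (hdeg1 : ∀ w, T.Adj v1 w → w = v0 ∨ w = v2)
    (hex : ∃ f, IsTRDF (addEdge T v1 v3) f)
    (hsup : gammaTR (addEdge T v1 v3) + 2 = gammaTR T) : False := by
  classical
  obtain ⟨h, hh, hsum⟩ := gammaTR_exists hex
  set m := gammaTR (addEdge T v1 v3) with hm
  have hh' := hh
  obtain ⟨h2, hz, hp⟩ := hh
  have h01ne : v0 ≠ v1 := h01.ne
  have h12ne : v1 ≠ v2 := h12.ne
  have h23ne : v2 ≠ v3 := h23.ne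
  -- neighbours of v0 in T+e : only v1
  have nbr0 : ∀ u, (addEdge T v1 v3).Adj u v0 → u = v1 := by
    intro u hu
    rcases (addEdge_adj h13ne u v0).mp hu with hT | ⟨he1, he2⟩ | ⟨he1, he2⟩
    · exact hleaf0 u hT.symm
    · exact absurd he2 h03ne
    · exact absurd he2 h01ne
  -- neighbours of v1 in T+e : v0, v2, v3
  have nbr1 : ∀ u, (addEdge T v1 v3).Adj u v1 → u = v0 ∨ u = v2 ∨ u = v3 := by
    intro u hu
    rcases (addEdge_adj h13ne u v1).mp hu with hT | ⟨he1, he2⟩ | ⟨he1, he2⟩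
    · rcases hdeg1 u hT.symm with h' | h'
      · exact Or.inl h'
      · exact Or.inr (Or.inl h')
    · exact absurd he2 h13ne
    · exact Or.inr (Or.inr he1)
  -- neighbours of v3 in T+e : T-neighbours or v1
  have nbr3 : ∀ u, (addEdge T v1 v3).Adj u v3 → T.Adj u v3 ∨ u = v1 := by
    intro u hu
    rcases (addEdge_adj h13ne u v3).mp hu with hT | ⟨he1, he2⟩ | ⟨he1, he2⟩
    · exact Or.inl hT
    · exact Or.inr he1
    · exact absurd he2 h13ne.symm
  -- Step 1 : h v1 ≥ 1
  have hv1pos : 1 ≤ h v1 := by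
    by_contra hcon
    have hv10 : h v1 = 0 := by omega
    rcases Nat.eq_zero_or_pos (h v0) with hv00 | hv0p
    · obtain ⟨u, hu, hu2⟩ := hz v0 hv00
      rw [nbr0 u hu] at hu2; omega
    · obtain ⟨u, hu, hup⟩ := hp v0 hv0p
      rw [nbr0 u hu] at hup; omega
  by_cases hB3 : h v0 = 0 ∧ h v2 = 0
  · -- case B3 : both T-neighbours of v1 are zero
    obtain ⟨hv00, hv20⟩ := hB3
    have hv12 : h v1 = 2 := by
      obtain ⟨u, hu, hu2⟩ := hz v0 hv00
      rw [nbr0 u hu] at hu2; exact hu2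
    have hv3p : 0 < h v3 := by
      obtain ⟨u, hu, hup⟩ := hp v1 (by omega)
      rcases nbr1 u hu with he | he | he <;> rw [he] at hup
      · omega
      · omega
      · exact hup
    set g := Function.update h v2 1 with hg
    have hsum2 : ∑ v, g v = m + 1 := by
      have := sum_update_add h v2 1; simp only [hg]; omega
    have hgood : IsTRDF T g :=
      trdf_of_ge h13ne hh'
        (fun v => by
          by_cases h' : v = v2
          · rw [h']; simp only [hg, Function.update_self]; omega
          · simp only [hg, Function.update_of_ne h']; exact le_refl _)
        (fun v => by
          by_cases h' : v = v2
          · rw [h']; simp only [hg, Function.update_self]; omega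
          · simp only [hg, Function.update_of_ne h']; exact h2 v)
        (by intro h'; rw [hg, Function.update_of_ne h12ne] at h'; omega)
        (by intro h'; rw [hg, Function.update_of_ne h23ne.symm] at h'; omega)
        (fun _ => ⟨v2, h12.symm, by rw [hg, Function.update_self]; omega⟩)
        (fun _ => ⟨v2, h23, by rw [hg, Function.update_self]; omega⟩)
        (fun v hv0' hvp hva hvb => by
          by_cases h' : v = v2
          · subst h'; exact ⟨v1, h12, by rw [hg, Function.update_of_ne h12ne]; omega⟩
          · rw [hg, Function.update_of_ne h'] at hvp; omega)
    have := gammaTR_le hgood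
    omega
  · -- ¬B3 : h v0 ≥ 1 or h v2 ≥ 1
    rcases Nat.eq_zero_or_pos (h v3) with hv30 | hv3p
    · -- B2-type analysis
      by_cases hw2 : ∃ w, T.Adj w v3 ∧ 0 < h w
      · by_cases hw2' : ∃ w, T.Adj w v3 ∧ h w = 2
        · -- h itself is a TRDF of T
          have hgood : IsTRDF T h := by
            refine ⟨h2, ?_, ?_⟩
            · intro v hv
              by_cases h1' : v = v1; · rw [h1'] at hv; omega
              by_cases h3' : v = v3
              · rw [h3']; obtain ⟨w, hw, hwp⟩ := hw2'; exact ⟨w, hw, hwp⟩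
              obtain ⟨u, hu, hu2⟩ := hz v hv
              rcases (addEdge_adj h13ne u v).mp hu with hT | ⟨he1, he2⟩ | ⟨he1, he2⟩
              · exact ⟨u, hT, hu2⟩
              · exact absurd he2 h3'
              · exact absurd he2 h1'
            · intro v hv
              by_cases h1' : v = v1
              · rw [h1'] at hv ⊢
                obtain ⟨u, hu, hup⟩ := hp v1 hv
                rcases nbr1 u hu with he | he | he
                · exact ⟨v0, h01, by rw [he] at hup; exact hup⟩
                · exact ⟨v2, h12.symm, by rw [he] at hup; exact hup⟩
                · rw [he] at hup; omega
              by_cases h3' : v = v3; · rw [h3'] at hv; omega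
              obtain ⟨u, hu, hup⟩ := hp v hv
              rcases (addEdge_adj h13ne u v).mp hu with hT | ⟨he1, he2⟩ | ⟨he1, he2⟩
              · exact ⟨u, hT, hup⟩
              · exact absurd he2 h3'
              · exact absurd he2 h1'
          have := gammaTR_le hgood
          omega
        · -- v3's 2-witness is v1 via the new edge, and some T-neighbour of v3 is positive
          have hv12 : h v1 = 2 := by
            obtain ⟨u, hu, hu2⟩ := hz v3 hv30
            rcases nbr3 u hu with hT | he
            · exact absurd ⟨u, hT, hu2⟩ hw2'
            · rw [he] at hu2; exact hu2
          obtain ⟨w, hw, hwp⟩ := hw2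
          set g := Function.update h v3 1 with hg
          have hsum2 : ∑ v, g v = m + 1 := by
            have := sum_update_add h v3 1; simp only [hg]; omega
          have hwv3 : w ≠ v3 := hw.ne
          have hgood : IsTRDF T g :=
            trdf_of_ge h13ne hh'
              (fun v => by
                by_cases h' : v = v3
                · rw [h']; simp only [hg, Function.update_self]; omega
                · simp only [hg, Function.update_of_ne h']; exact le_refl _)
              (fun v => by
                by_cases h' : v = v3
                · rw [h']; simp only [hg, Function.update_self]; omega
                · simp only [hg, Function.update_of_ne h']; exact h2 v)
              (by intro h'; rw [hg, Function.update_of_ne h13ne] at h'; omega)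
              (by intro h'; rw [hg, Function.update_self] at h'; omega)
              (fun _ => by
                -- v1 positive : has a positive T-neighbour since h v3 = 0
                obtain ⟨u, hu, hup⟩ := hp v1 (by omega)
                rcases nbr1 u hu with he | he | he
                · exact ⟨v0, h01, by
                    rw [he] at hup
                    rw [hg, Function.update_of_ne (by exact fun hh3 => h03ne hh3)]
                    exact hup⟩
                · exact ⟨v2, h12.symm, by
                    rw [he] at hup
                    rw [hg, Function.update_of_ne h23ne]
                    exact hup⟩
                · rw [he] at hup; omega)
              (fun _ => ⟨w, hw, by rw [hg, Function.update_of_ne hwv3]; exact hwp⟩)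
              (fun v hv0' hvp hva hvb => by
                rw [hg, Function.update_of_ne hvb] at hvp; omega)
          have := gammaTR_le hgood
          omega
      · -- all T-neighbours of v3 are zero, h v3 = 0
        push_neg at hw2
        have hv20 : h v2 = 0 := by
          have := hw2 v2 h23; omega
        have hv0p : 0 < h v0 := by
          rcases Nat.eq_zero_or_pos (h v0) with h' | h'
          · exact absurd ⟨h', hv20⟩ hB3
          · exact h'
        have hv12 : h v1 = 2 := by
          obtain ⟨u, hu, hu2⟩ := hz v3 hv30
          rcases nbr3 u hu with hT | he
          · have := hw2 u hT; omega
          · rw [he] at hu2; exact hu2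
        set g : V → ℕ :=
          Function.update (Function.update (Function.update h v1 1) v2 1) v3 1 with hg
        have gval : ∀ v, v ≠ v1 → v ≠ v2 → v ≠ v3 → g v = h v := by
          intro v hx1 hx2 hx3
          simp only [hg, Function.update_of_ne hx3, Function.update_of_ne hx2,
            Function.update_of_ne hx1]
        have gv1 : g v1 = 1 := by
          simp only [hg, Function.update_of_ne h13ne, Function.update_of_ne h12ne,
            Function.update_self]
        have gv2 : g v2 = 1 := by
          simp only [hg, Function.update_of_ne h23ne, Function.update_self]
        have gv3 : g v3 = 1 := by simp only [hg, Function.update_self]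
        have hsum2 : ∑ v, g v = m + 1 := by
          have e1 := sum_update_add h v1 1
          have e2 := sum_update_add (Function.update h v1 1) v2 1
          have e3 := sum_update_add
            (Function.update (Function.update h v1 1) v2 1) v3 1
          have w1 : Function.update h v1 1 v2 = h v2 :=
            Function.update_of_ne h12ne.symm 1 h
          have w2 : Function.update (Function.update h v1 1) v2 1 v3 =
              h v3 := by
            rw [Function.update_of_ne h23ne.symm, Function.update_of_ne h13ne.symm]
          rw [w1] at e2; rw [w2] at e3
          simp only [hg]
          omega
        have hgood : IsTRDF T g := by
          refine ⟨?_, ?_, ?_⟩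
          · intro v
            by_cases hx1 : v = v1; · rw [hx1, gv1]; omega
            by_cases hx2 : v = v2; · rw [hx2, gv2]; omega
            by_cases hx3 : v = v3; · rw [hx3, gv3]; omega
            rw [gval v hx1 hx2 hx3]; exact h2 v
          · intro v hv
            by_cases hx1 : v = v1; · rw [hx1, gv1] at hv; omega
            by_cases hx2 : v = v2; · rw [hx2, gv2] at hv; omega
            by_cases hx3 : v = v3; · rw [hx3, gv3] at hv; omega
            rw [gval v hx1 hx2 hx3] at hv
            obtain ⟨u, hu, hu2⟩ := hz v hv
            rcases (addEdge_adj h13ne u v).mp hu with hT | ⟨he1, he2⟩ | ⟨he1, he2⟩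
            · have hu1 : u ≠ v1 := by
                intro h'; rw [h'] at hT
                rcases hdeg1 v hT with h'' | h''
                · rw [h''] at hv; omega
                · exact hx2 h''
              have hu2' : u ≠ v2 := by intro h'; rw [h'] at hu2; omega
              have hu3' : u ≠ v3 := by intro h'; rw [h'] at hu2; omega
              exact ⟨u, hT, by rw [gval u hu1 hu2' hu3']; exact hu2⟩
            · exact absurd he2 hx3
            · exact absurd he2 hx1
          · intro v hv
            by_cases hx1 : v = v1
            · exact ⟨v0, by rw [hx1]; exact h01, by
                rw [gval v0 h01ne h02ne h03ne]; exact hv0p⟩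
            by_cases hx2 : v = v2
            · exact ⟨v1, by rw [hx2]; exact h12, by rw [gv1]; omega⟩
            by_cases hx3 : v = v3
            · exact ⟨v2, by rw [hx3]; exact h23, by rw [gv2]; omega⟩
            rw [gval v hx1 hx2 hx3] at hv
            obtain ⟨u, hu, hup⟩ := hp v hv
            rcases (addEdge_adj h13ne u v).mp hu with hT | ⟨he1, he2⟩ | ⟨he1, he2⟩
            · refine ⟨u, hT, ?_⟩
              by_cases hu1 : u = v1; · rw [hu1, gv1]; omega
              by_cases hu2' : u = v2; · rw [hu2', gv2]; omega
              by_cases hu3' : u = v3; · rw [hu3', gv3]; omega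
              rw [gval u hu1 hu2' hu3']; exact hup
            · exact absurd he2 hx3
            · exact absurd he2 hx1
        have := gammaTR_le hgood
        omega
    · -- h v3 > 0
      by_cases hw : ∃ w, T.Adj w v3 ∧ 0 < h w
      · -- h itself is a TRDF of T
        have hgood : IsTRDF T h := by
          refine ⟨h2, ?_, ?_⟩
          · intro v hv
            by_cases h1' : v = v1; · rw [h1'] at hv; omega
            by_cases h3' : v = v3; · rw [h3'] at hv; omega
            obtain ⟨u, hu, hu2⟩ := hz v hv
            rcases (addEdge_adj h13ne u v).mp hu with hT | ⟨he1, he2⟩ | ⟨he1, he2⟩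
            · exact ⟨u, hT, hu2⟩
            · exact absurd he2 h3'
            · exact absurd he2 h1'
          · intro v hv
            by_cases h1' : v = v1
            · rcases Nat.eq_zero_or_pos (h v0) with h0' | h0'
              · have h2p : 0 < h v2 := by
                  rcases Nat.eq_zero_or_pos (h v2) with h2' | h2'
                  · exact absurd ⟨h0', h2'⟩ hB3
                  · exact h2'
                exact ⟨v2, by rw [h1']; exact h12.symm, h2p⟩
              · exact ⟨v0, by rw [h1']; exact h01, h0'⟩
            by_cases h3' : v = v3
            · obtain ⟨w, hww, hwp⟩ := hw
              exact ⟨w, by rw [h3']; exact hww, hwp⟩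
            obtain ⟨u, hu, hup⟩ := hp v hv
            rcases (addEdge_adj h13ne u v).mp hu with hT | ⟨he1, he2⟩ | ⟨he1, he2⟩
            · exact ⟨u, hT, hup⟩
            · exact absurd he2 h3'
            · exact absurd he2 h1'
        have := gammaTR_le hgood
        omega
      · -- all T-neighbours of v3 are zero ; fix v2 ↦ 1
        push_neg at hw
        have hv20 : h v2 = 0 := by have := hw v2 h23; omega
        set g := Function.update h v2 1 with hg
        have hsum2 : ∑ v, g v = m + 1 := by
          have := sum_update_add h v2 1; simp only [hg]; omega
        have hgood : IsTRDF T g :=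
          trdf_of_ge h13ne hh'
            (fun v => by
              by_cases h' : v = v2
              · rw [h']; simp only [hg, Function.update_self]; omega
              · simp only [hg, Function.update_of_ne h']; exact le_refl _)
            (fun v => by
              by_cases h' : v = v2
              · rw [h']; simp only [hg, Function.update_self]; omega
              · simp only [hg, Function.update_of_ne h']; exact h2 v)
            (by intro h'; rw [hg, Function.update_of_ne h12ne] at h'; omega)
            (by intro h'; rw [hg, Function.update_of_ne h23ne.symm] at h'; omega)
            (fun _ => ⟨v2, h12.symm, by rw [hg, Function.update_self]; omega⟩)
            (fun _ => ⟨v2, h23, by rw [hg, Function.update_self]; omega⟩)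
            (fun v hv0' hvp hva hvb => by
              by_cases h' : v = v2
              · refine ⟨v1, by rw [h']; exact h12, ?_⟩
                rw [hg, Function.update_of_ne h12ne]; omega
              · rw [hg, Function.update_of_ne h'] at hvp; omega)
        have := gammaTR_le hgood
        omega

lemma tree_structure [Fintype V] {T : SimpleGraph V} (hconn : T.Connected)
    (hacyc : T.IsAcyclic) {u v : V} (huv : u ≠ v) (hnadj : ¬T.Adj u v) :
    (∃ v0 v1 v2 v3 : V, T.Adj v0 v1 ∧ T.Adj v1 v2 ∧ T.Adj v2 v3 ∧ v1 ≠ v3 ∧ ¬T.Adj v1 v3 ∧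
        v0 ≠ v2 ∧ v0 ≠ v3 ∧ (∀ w, T.Adj v0 w → w = v1) ∧
        (∀ w, T.Adj v1 w → w = v0 ∨ w = v2)) ∨
    (∃ l1 l2 s : V, l1 ≠ l2 ∧ ¬T.Adj l1 l2 ∧ T.Adj s l1 ∧ T.Adj s l2 ∧
        (∀ w, T.Adj l1 w → w = s) ∧ (∀ w, T.Adj l2 w → w = s)) := by
  classical
  have huniq : ∀ ⦃x y : V⦄ (p q : T.Path x y), p = q :=
    SimpleGraph.isAcyclic_iff_path_unique.mp hacyc
  have path_eq : ∀ {a b : V} (r1 r2 : T.Walk a b), r1.IsPath → r2.IsPath → r1 = r2 := by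
    intro a b r1 r2 h1 h2
    exact congrArg Subtype.val (huniq ⟨r1, h1⟩ ⟨r2, h2⟩)
  have hbdd : BddAbove {n | ∃ (x y : V) (p : T.Walk x y), p.IsPath ∧ p.length = n} := by
    refine ⟨Fintype.card V, ?_⟩
    rintro n ⟨x, y, p, hp, rfl⟩
    exact hp.length_lt.le
  obtain ⟨N, hNmem, hNmax⟩ :
      ∃ N, (∃ (x y : V) (p : T.Walk x y), p.IsPath ∧ p.length = N) ∧
        ∀ {a b : V} (q : T.Walk a b), q.IsPath → q.length ≤ N := by
    have h0mem : 0 ∈ {n | ∃ (x y : V) (p : T.Walk x y), p.IsPath ∧ p.length = n} :=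
      ⟨u, u, Walk.nil, Walk.IsPath.nil, rfl⟩
    refine ⟨sSup {n | ∃ (x y : V) (p : T.Walk x y), p.IsPath ∧ p.length = n},
      Nat.sSup_mem ⟨0, h0mem⟩ hbdd, ?_⟩
    intro a b q hq
    exact le_csSup hbdd ⟨a, b, q, hq, rfl⟩
  obtain ⟨x, y, p, hp, hplen⟩ := hNmem
  have hN2 : 2 ≤ N := by
    obtain ⟨q⟩ := hconn.preconnected u v
    have hr : (q.toPath : T.Walk u v).IsPath := q.toPath.2
    have h0 : (q.toPath : T.Walk u v).length ≠ 0 := fun h =>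
      huv (Walk.eq_of_length_eq_zero h)
    have h1 : (q.toPath : T.Walk u v).length ≠ 1 := fun h =>
      hnadj (Walk.adj_of_length_eq_one h)
    have := hNmax _ hr
    omega
  -- any neighbour of the start of a maximum-length path is the second vertex
  have leaf_any : ∀ {a b : V} (r : T.Walk a b), r.IsPath → r.length = N →
      ∀ w, T.Adj a w → w = r.getVert 1 := by
    intro a b r hr hrlen w haw
    by_cases hws : w ∈ r.support
    · have hsingle : (Walk.cons haw Walk.nil : T.Walk a w).IsPath := by
        rw [Walk.cons_isPath_iff]
        exact ⟨Walk.IsPath.nil, by simp [haw.ne]⟩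
      have htake : r.takeUntil w hws = Walk.cons haw Walk.nil :=
        path_eq _ _ (hr.takeUntil hws) hsingle
      have hlen : (r.takeUntil w hws).length = 1 := by rw [htake]; simp
      have hv := congrArg (fun t => Walk.getVert t 1) (r.take_spec hws).symm
      simp only [Walk.getVert_append, hlen] at hv
      simp only [lt_irrefl, if_neg, Nat.sub_self, Walk.getVert_zero] at hv
      exact hv.symm
    · have hcons : (Walk.cons haw.symm r).IsPath := hr.cons hws
      have := hNmax _ hcons
      rw [Walk.length_cons, hrlen] at this
      omega
  -- prefix comparison on the fixed maximum path p
  have take_eq : ∀ {w : V} (hws : w ∈ p.support) (r2 : T.Walk x w), r2.IsPath →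
      ∀ i, i ≤ r2.length → p.getVert i = r2.getVert i := by
    intro w hws r2 hr2 i hi
    have htake : p.takeUntil w hws = r2 := path_eq _ _ (hp.takeUntil hws) hr2
    have hlen : (p.takeUntil w hws).length = r2.length := by rw [htake]
    have hv := congrArg (fun t => Walk.getVert t i) (p.take_spec hws).symm
    simp only [Walk.getVert_append] at hv
    by_cases h' : i < (p.takeUntil w hws).length
    · rw [if_pos h'] at hv
      rw [hv, htake]
    · rw [if_neg h'] at hv
      have hieq : i = r2.length := by omega
      have h1 : (p.dropUntil w hws).getVert (i - (p.takeUntil w hws).length) = w := by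
        have he : i - (p.takeUntil w hws).length = 0 := by omega
        rw [he, Walk.getVert_zero]
      rw [h1] at hv
      rw [hv, hieq, Walk.getVert_length]
  -- decompose p twice : p = x -(h01)- v1 -(h12)- v2 -(r)- y
  obtain ⟨v1, h01, q, rfl⟩ : ∃ (v1 : V) (h : T.Adj x v1) (q : T.Walk v1 y),
      p = Walk.cons h q := by
    cases p with
    | nil => simp only [Walk.length_nil] at hplen; omega
    | cons h q => exact ⟨_, h, q, rfl⟩
  have hqlen : q.length + 1 = N := by
    rw [Walk.length_cons] at hplen; omega
  obtain ⟨v2, h12, r, rfl⟩ : ∃ (v2 : V) (h : T.Adj v1 v2) (r : T.Walk v2 y),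
      q = Walk.cons h r := by
    cases q with
    | nil => simp only [Walk.length_nil] at hqlen; omega
    | cons h r => exact ⟨_, h, r, rfl⟩
  have hrlen : r.length + 2 = N := by
    rw [Walk.length_cons] at hqlen; omega
  rw [Walk.cons_isPath_iff] at hp
  obtain ⟨hq, hxq⟩ := hp
  rw [Walk.cons_isPath_iff] at hq
  obtain ⟨hr, h1r⟩ := hq
  have hsuppq : (Walk.cons h12 r).support = v1 :: r.support := Walk.support_cons _ _
  have hxv1 : x ≠ v1 := h01.ne
  have h12ne : v1 ≠ v2 := h12.ne
  have hxv2 : x ≠ v2 := by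
    intro h'
    exact hxq (by rw [hsuppq, h']; exact List.mem_cons_of_mem _ r.start_mem_support)
  have pget1 : (Walk.cons h01 (Walk.cons h12 r)).getVert 1 = v1 := by
    rw [Walk.getVert_cons_succ, Walk.getVert_zero]
  have pget2 : (Walk.cons h01 (Walk.cons h12 r)).getVert 2 = v2 := by
    rw [Walk.getVert_cons_succ, Walk.getVert_cons_succ, Walk.getVert_zero]
  have hppath : (Walk.cons h01 (Walk.cons h12 r)).IsPath := by
    rw [Walk.cons_isPath_iff, Walk.cons_isPath_iff]
    exact ⟨⟨hr, h1r⟩, hxq⟩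
  have leafx : ∀ w, T.Adj x w → w = v1 := by
    intro w hw
    have := leaf_any _ hppath hplen w hw
    rwa [pget1] at this
  by_cases hzex : ∃ z, T.Adj v1 z ∧ z ≠ x ∧ z ≠ v2
  · -- case B : extra neighbour z of v1, which must be a leaf
    obtain ⟨z, h1z, hzx, hzv2⟩ := hzex
    have hzv1 : z ≠ v1 := h1z.ne'
    have hzp : z ∉ (Walk.cons h01 (Walk.cons h12 r)).support := by
      intro hzs
      have hr3 : (Walk.cons h01 (Walk.cons h1z Walk.nil) : T.Walk x z).IsPath := by
        rw [Walk.cons_isPath_iff, Walk.cons_isPath_iff]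
        refine ⟨⟨Walk.IsPath.nil, by simp [h1z.ne]⟩, ?_⟩
        rw [Walk.support_cons]
        simp only [Walk.support_nil, List.mem_cons, List.mem_singleton]
        rintro (h' | h' | h')
        · exact hxv1 h'
        · exact hzx h'.symm
        · simp at h'
      have heq := take_eq hzs _ hr3 2 (by simp)
      have h2 : (Walk.cons h01 (Walk.cons h1z Walk.nil) : T.Walk x z).getVert 2 = z := by
        rw [Walk.getVert_cons_succ, Walk.getVert_cons_succ, Walk.getVert_zero]
      rw [h2, pget2] at heq
      exact hzv2 heq.symm
    have hzr : z ∉ r.support := by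
      intro h'
      refine hzp ?_
      rw [Walk.support_cons, hsuppq]
      exact List.mem_cons_of_mem _ (List.mem_cons_of_mem _ h')
    have leafz : ∀ w, T.Adj z w → w = v1 := by
      intro w hzw
      by_contra hwv1
      have hwz : w ≠ z := hzw.ne'
      have hwx : w ≠ x := by
        intro h'
        subst h'
        exact hzv1 (leafx z hzw.symm)
      by_cases hwsup : w ∈ (Walk.cons h01 (Walk.cons h12 r)).support
      · have hc3 : (Walk.cons h01 (Walk.cons h1z (Walk.cons hzw Walk.nil)) :
            T.Walk x w).IsPath := by
          rw [Walk.cons_isPath_iff, Walk.cons_isPath_iff, Walk.cons_isPath_iff]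
          refine ⟨⟨⟨Walk.IsPath.nil, by simp [hzw.ne]⟩, ?_⟩, ?_⟩
          · rw [Walk.support_cons]
            simp only [Walk.support_nil, List.mem_cons, List.mem_singleton]
            rintro (h' | h' | h')
            · exact h1z.ne h'
            · exact hwv1 h'.symm
            · simp at h'
          · rw [Walk.support_cons, Walk.support_cons]
            simp only [Walk.support_nil, List.mem_cons, List.mem_singleton]
            rintro (h' | h' | h' | h')
            · exact hxv1 h'
            · exact hzx h'.symm
            · exact hwx h'.symm
            · simp at h'
        have heq := take_eq hwsup _ hc3 2 (by simp)
        have h2 : (Walk.cons h01 (Walk.cons h1z (Walk.cons hzw Walk.nil)) :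
            T.Walk x w).getVert 2 = z := by
          rw [Walk.getVert_cons_succ, Walk.getVert_cons_succ, Walk.getVert_zero]
        rw [h2, pget2] at heq
        exact hzv2 heq.symm
      · have hbig : (Walk.cons hzw.symm (Walk.cons h1z.symm (Walk.cons h12 r)) :
            T.Walk w y).IsPath := by
          rw [Walk.cons_isPath_iff, Walk.cons_isPath_iff]
          refine ⟨⟨by rw [Walk.cons_isPath_iff]; exact ⟨hr, h1r⟩, ?_⟩, ?_⟩
          · rw [hsuppq]
            intro h'
            rcases List.mem_cons.mp h' with h' | h'
            · exact hzv1 h'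
            · exact hzr h'
          · rw [Walk.support_cons]
            intro h'
            rcases List.mem_cons.mp h' with h' | h'
            · exact hwz h'
            · exact hwsup (by rw [Walk.support_cons]; exact List.mem_cons_of_mem _ h')
        have := hNmax _ hbig
        rw [Walk.length_cons, Walk.length_cons, Walk.length_cons] at this
        omega
    right
    refine ⟨x, z, v1, hzx.symm, ?_, h01.symm, h1z, leafx, leafz⟩
    intro h'
    exact hzv1 (leafx z h')
  · -- no extra neighbour : v1 has degree 2
    have hdeg1 : ∀ w, T.Adj v1 w → w = x ∨ w = v2 := by
      intro w hw
      by_cases h' : w = x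
      · exact Or.inl h'
      by_cases h'' : w = v2
      · exact Or.inr h''
      · exact absurd ⟨w, hw, h', h''⟩ hzex
    by_cases hN3 : 3 ≤ N
    · -- case A
      left
      obtain ⟨v3, h23, t, rfl⟩ : ∃ (v3 : V) (h : T.Adj v2 v3) (t : T.Walk v3 y),
          r = Walk.cons h t := by
        cases r with
        | nil => simp only [Walk.length_nil] at hrlen; omega
        | cons h t => exact ⟨_, h, t, rfl⟩
      have h13ne : v1 ≠ v3 := by
        intro h'
        refine h1r ?_
        rw [Walk.support_cons, h']
        exact List.mem_cons_of_mem _ t.start_mem_support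
      have hxv3 : x ≠ v3 := by
        intro h'
        refine hxq ?_
        rw [hsuppq, Walk.support_cons, h']
        exact List.mem_cons_of_mem _ (List.mem_cons_of_mem _ t.start_mem_support)
      have h13 : ¬T.Adj v1 v3 := by
        intro h'
        rcases hdeg1 v3 h' with h'' | h''
        · exact hxv3 h''.symm
        · exact h23.ne h''.symm
      exact ⟨x, v1, v2, v3, h01, h12, h23, h13ne, h13, hxv2, hxv3, leafx, hdeg1⟩
    · -- N = 2 : the other end y is also a leaf with the same support v1
      have hNeq : N = 2 := by omega
      have hrnil : r.length = 0 := by omega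
      have hyv2 : v2 = y := Walk.eq_of_length_eq_zero hrnil
      have leafy : ∀ w, T.Adj y w → w = v1 := by
        have hrev : (Walk.cons h01 (Walk.cons h12 r)).reverse.IsPath := hppath.reverse
        have hrevlen : (Walk.cons h01 (Walk.cons h12 r)).reverse.length = N := by
          rw [Walk.length_reverse]; exact hplen
        intro w hw
        have hthis := leaf_any _ hrev hrevlen w hw
        rw [Walk.getVert_reverse] at hthis
        have hidx : (Walk.cons h01 (Walk.cons h12 r)).length - 1 = 1 := by
          rw [hplen, hNeq]
        rw [hidx, pget1] at hthis
        exact hthis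
      right
      have hxy : x ≠ y := by
        rw [← hyv2]
        exact hxv2
      refine ⟨x, y, v1, hxy, ?_, h01.symm, by rw [← hyv2]; exact h12, leafx, leafy⟩
      intro h'
      have := leafx y h'
      rw [← hyv2] at this
      exact h12.ne this.symm


lemma exists_trdf_addEdge [Fintype V] {T : SimpleGraph V} (hconn : T.Connected)
    {u0 v0 : V} (huv : u0 ≠ v0) (a b : V) : ∃ f, IsTRDF (addEdge T a b) f := by
  refine ⟨fun _ => 2, fun _ => le_refl 2, fun w h' => by simp at h', fun w _ => ?_⟩
  have hex : ∃ t, t ≠ w := by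
    by_cases h' : w = u0
    · exact ⟨v0, by rw [h']; exact huv.symm⟩
    · exact ⟨u0, fun hh => h' hh.symm⟩
  obtain ⟨t, htw⟩ := hex
  obtain ⟨q⟩ := hconn.preconnected w t
  have hql : q.length ≠ 0 := fun h => htw (Walk.eq_of_length_eq_zero h).symm
  have hadj : T.Adj w (q.getVert 1) := by
    have := q.adj_getVert_succ (i := 0) (by omega)
    rwa [Walk.getVert_zero] at this
  refine ⟨q.getVert 1, ?_, by norm_num⟩
  simp only [addEdge, SimpleGraph.sup_adj]
  exact Or.inl hadj.symm

end TRAux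

theorem stmt11 {W : Type*} [Fintype W] (T : SimpleGraph W) (htree : T.IsTree) :
    ¬((∃ u v : W, u ≠ v ∧ ¬T.Adj u v) ∧
      ∀ u v : W, u ≠ v → ¬T.Adj u v → gammaTR (addEdge T u v) + 2 = gammaTR T) := by
  rintro ⟨⟨u, v, huv, hnadj⟩, hsup⟩
  classical
  obtain ⟨hconn, hacyc⟩ := (SimpleGraph.isTree_iff _).mp htree
  rcases TRAux.tree_structure hconn hacyc huv hnadj with
    ⟨v0, v1, v2, v3, h01, h12, h23, h13ne, h13, h02, h03, hleaf0, hdeg1⟩ |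
    ⟨l1, l2, s, hll, hnl, hs1, hs2, hlf1, hlf2⟩
  · exact TRAux.killA h01 h12 h23 h13ne h13 h02 h03 hleaf0 hdeg1
      (TRAux.exists_trdf_addEdge hconn huv v1 v3) (hsup v1 v3 h13ne h13)
  · exact TRAux.killB hll hnl hs1 hs2 hlf1 hlf2
      (TRAux.exists_trdf_addEdge hconn huv l1 l2) (hsup l1 l2 hll hnl)
end
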